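/- arXiv:1906.04981 — 5 statements merged into one kernel-verified Lean document; each statement's English description precedes it below -/
import Mathlib

section
/- For every pseudo-model M, its inquisitive closure M↓ (obtained by replacing Σ(w) with its downward closure {t : t ⊆ s for some s ∈ Σ(w)}) satisfies exactly the same INQML formulas at every information state: for all φ ∈ INQML and all s ⊆ W, M↓, s ⊨ φ iff M, s ⊨ φ. -/
inductive InqForm (P : Type) : Type
  | atom : P → InqForm P
  | bot : InqForm P
  | and : InqForm P → InqForm P → InqForm P
  | impl : InqForm P → InqForm P → InqForm P
  | ior : InqForm P → InqForm P → InqForm P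
  | box : InqForm P → InqForm P
  | boxplus : InqForm P → InqForm P

/-- A pseudo-model: worlds `W`, inquisitive assignment `Sig` (nonempty valued),
propositional valuation `V`. -/
structure PseudoModel (P W : Type) where
  Sig : W → Set (Set W)
  Sig_nonempty : ∀ w, (Sig w).Nonempty
  V : P → Set W

/-- The associated modal assignment σ(w) = ⋃ Σ(w). -/
def PseudoModel.sigma {P W : Type} (M : PseudoModel P W) (w : W) : Set W :=
  ⋃₀ M.Sig w

/-- Support semantics of INQML over pseudo-models. -/
def support {P W : Type} (M : PseudoModel P W) : InqForm P → Set W → Prop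
  | .atom p, s => s ⊆ M.V p
  | .bot, s => s = ∅
  | .and φ ψ, s => support M φ s ∧ support M ψ s
  | .impl φ ψ, s => ∀ t ⊆ s, support M φ t → support M ψ t
  | .ior φ ψ, s => support M φ s ∨ support M ψ s
  | .box φ, s => ∀ w ∈ s, support M φ (M.sigma w)
  | .boxplus φ, s => ∀ w ∈ s, ∀ t ∈ M.Sig w, support M φ t

/-- The flatness grade ♭(φ). -/
def flatGrade {P : Type} : InqForm P → ℕ
  | .atom _ => 0
  | .bot => 0
  | .and φ ψ => max (flatGrade φ) (flatGrade ψ)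
  | .impl _ ψ => flatGrade ψ
  | .ior φ ψ => flatGrade φ + flatGrade ψ + 1
  | .box _ => 0
  | .boxplus _ => 0

/-- Downward closure of a family of information states. -/
def downClose {W : Type} (Pi : Set (Set W)) : Set (Set W) :=
  {t | ∃ s ∈ Pi, t ⊆ s}


lemma support_mono {P W : Type} (M : PseudoModel P W) (φ : InqForm P) :
    ∀ s t : Set W, t ⊆ s → support M φ s → support M φ t := by
  induction φ with
  | atom p => intro s t hts h; exact hts.trans h
  | bot => intro s t hts h; subst h; exact Set.subset_eq_empty hts rfl
  | and φ ψ ih1 ih2 => intro s t hts h; exact ⟨ih1 s t hts h.1, ih2 s t hts h.2⟩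
  | impl φ ψ ih1 ih2 => intro s t hts h u hut hu; exact h u (hut.trans hts) hu
  | ior φ ψ ih1 ih2 =>
      intro s t hts h
      rcases h with h | h
      · exact Or.inl (ih1 s t hts h)
      · exact Or.inr (ih2 s t hts h)
  | box φ ih => intro s t hts h w hw; exact h w (hts hw)
  | boxplus φ ih => intro s t hts h w hw; exact h w (hts hw)

lemma sigma_eq {P W : Type} (M M' : PseudoModel P W)
    (hSig : ∀ w, M'.Sig w = downClose (M.Sig w)) (w : W) :
    M'.sigma w = M.sigma w := by
  unfold PseudoModel.sigma
  rw [hSig]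
  apply Set.Subset.antisymm
  · rintro x ⟨t, ⟨u, hu, htu⟩, hxt⟩; exact ⟨u, hu, htu hxt⟩
  · rintro x ⟨u, hu, hxu⟩; exact ⟨u, ⟨u, hu, le_refl u⟩, hxu⟩

theorem inquisitive_closure_same_support {P W : Type} (M M' : PseudoModel P W)
    (hSig : ∀ w, M'.Sig w = downClose (M.Sig w)) (hV : M'.V = M.V)
    (φ : InqForm P) (s : Set W) :
    support M' φ s ↔ support M φ s := by
  induction φ generalizing s with
  | atom p => simp [support, hV]
  | bot => simp [support]
  | and φ ψ ih1 ih2 => simp [support, ih1, ih2]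
  | impl φ ψ ih1 ih2 =>
      constructor
      · intro h t hts ht; exact (ih2 t).mp (h t hts ((ih1 t).mpr ht))
      · intro h t hts ht; exact (ih2 t).mpr (h t hts ((ih1 t).mp ht))
  | ior φ ψ ih1 ih2 => simp [support, ih1, ih2]
  | box φ ih =>
      constructor
      · intro h w hw; exact (ih _).mp (sigma_eq M M' hSig w ▸ h w hw)
      · intro h w hw; rw [sigma_eq M M' hSig w]; exact (ih _).mpr (h w hw)
  | boxplus φ ih =>
      constructor
      · intro h w hw t ht
        exact (ih t).mp (h w hw t (by rw [hSig]; exact ⟨t, ht, le_refl t⟩))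
      · intro h w hw t ht
        rw [hSig] at ht
        obtain ⟨u, hu, htu⟩ := ht
        exact (ih t).mpr (support_mono M φ u t htu (h w hw u hu))
end

section
/- Graded flatness: for every φ ∈ INQML with flatness grade ♭(φ), and every pseudo-model M and information state s, M, s ⊨ φ if and only if M, t ⊨ φ for all t ⊆ s with |t| ≤ ♭(φ)+1. -/
lemma support_persist {P W : Type} (M : PseudoModel P W) (φ : InqForm P) :
    ∀ {s t : Set W}, t ⊆ s → support M φ s → support M φ t := by
  induction φ with
  | atom p => intro s t hts hs; exact hts.trans hs
  | bot =>
    intro s t hts hs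
    have : s = ∅ := hs
    subst this
    exact Set.subset_empty_iff.mp hts
  | and φ ψ ihφ ihψ => intro s t hts hs; exact ⟨ihφ hts hs.1, ihψ hts hs.2⟩
  | impl φ ψ ihφ ihψ => intro s t hts hs u hut hu; exact hs u (hut.trans hts) hu
  | ior φ ψ ihφ ihψ =>
    intro s t hts hs
    cases hs with
    | inl h => exact Or.inl (ihφ hts h)
    | inr h => exact Or.inr (ihψ hts h)
  | box φ ih => intro s t hts hs w hw; exact hs w (hts hw)
  | boxplus φ ih => intro s t hts hs w hw; exact hs w (hts hw)

theorem graded_flatness {P W : Type} (φ : InqForm P) (M : PseudoModel P W) (s : Set W) :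
    support M φ s ↔
      ∀ t ⊆ s, t.Finite → t.ncard ≤ flatGrade φ + 1 → support M φ t := by
  induction φ generalizing s with
  | atom p =>
    constructor
    · intro h t hts _ _; exact support_persist M _ hts h
    · intro h w hw
      have := h {w} (by simpa using hw) (Set.finite_singleton w) (by simp)
      exact this rfl
  | bot =>
    constructor
    · intro h t hts _ _; exact support_persist M _ hts h
    · intro h
      show s = ∅
      rw [Set.eq_empty_iff_forall_notMem]
      intro w hw
      have : ({w} : Set W) = ∅ :=
        h {w} (by simpa using hw) (Set.finite_singleton w) (by simp)
      exact Set.singleton_ne_empty w this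
  | and φ ψ ihφ ihψ =>
    constructor
    · intro h t hts _ _; exact support_persist M _ hts h
    · intro h
      constructor
      · refine (ihφ s).mpr ?_
        intro t hts hfin hcard
        exact (h t hts hfin
          (hcard.trans (Nat.add_le_add_right (le_max_left _ _) 1))).1
      · refine (ihψ s).mpr ?_
        intro t hts hfin hcard
        exact (h t hts hfin
          (hcard.trans (Nat.add_le_add_right (le_max_right _ _) 1))).2
  | impl φ ψ ihφ ihψ =>
    constructor
    · intro h t hts _ _; exact support_persist M _ hts h
    · intro h t hts hφt
      refine (ihψ t).mpr ?_
      intro u hut hfin hcard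
      have hu : support M (.impl φ ψ) u := h u (hut.trans hts) hfin hcard
      exact hu u (subset_refl u) (support_persist M φ hut hφt)
  | ior φ ψ ihφ ihψ =>
    constructor
    · intro h t hts _ _; exact support_persist M _ hts h
    · intro h
      by_contra hcon
      have hnφ : ¬ support M φ s := fun hs => hcon (Or.inl hs)
      have hnψ : ¬ support M ψ s := fun hs => hcon (Or.inr hs)
      rw [ihφ s] at hnφ
      rw [ihψ s] at hnψ
      push_neg at hnφ hnψ
      obtain ⟨t1, ht1s, ht1f, ht1c, ht1⟩ := hnφ
      obtain ⟨t2, ht2s, ht2f, ht2c, ht2⟩ := hnψ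
      have hsub : t1 ∪ t2 ⊆ s := Set.union_subset ht1s ht2s
      have hfin : (t1 ∪ t2).Finite := ht1f.union ht2f
      have hcard : (t1 ∪ t2).ncard ≤ flatGrade (.ior φ ψ) + 1 := by
        have := Set.ncard_union_le t1 t2
        show (t1 ∪ t2).ncard ≤ flatGrade φ + flatGrade ψ + 1 + 1
        omega
      cases h (t1 ∪ t2) hsub hfin hcard with
      | inl hh => exact ht1 (support_persist M φ Set.subset_union_left hh)
      | inr hh => exact ht2 (support_persist M ψ Set.subset_union_right hh)
  | box φ ih =>
    constructor
    · intro h t hts _ _; exact support_persist M _ hts h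
    · intro h w hw
      exact h {w} (by simpa using hw) (Set.finite_singleton w) (by simp) w rfl
  | boxplus φ ih =>
    constructor
    · intro h t hts _ _; exact support_persist M _ hts h
    · intro h w hw
      exact h {w} (by simpa using hw) (Set.finite_singleton w) (by simp) w rfl
end

section
/- Compactness of INQML over pseudo-models via FO: a set Φ ⊆ INQML is satisfiable at some nonempty information state of some pseudo-model if and only if every finite subset Φ₀ ⊆ Φ is satisfiable at some nonempty information state of some pseudo-model. -/
/-!
In the nontrivial direction, take an ultraproduct of models of the finite subsets of `Φ`, over an
ultrafilter on these subsets that eventually contains each `φ ∈ Φ`, and prove Łoś's theorem for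
support at the states `{f | ∀ᶠ i, f i ∈ g i}`. Plain induction on formulas fails, because an
implication quantifies over all substates, not only over states of this form. Instead, every formula
is equivalent to the inquisitive disjunction of its finitely many *resolutions*, which are flat: they
are supported at a state iff they are supported at each of its worlds. So Łoś at states reduces to
Łoś at single worlds for resolutions. At single worlds the connectives commute with ultrafilter
limits, and `□`, `⊞` call Łoś at states again, one modal level down.
-/

namespace InqML

open InqForm Filter

section Support

variable {P W : Type} {M : PseudoModel P W}

theorem support_anti {φ : InqForm P} {s t : Set W} (hts : t ⊆ s) :
    support M φ s → support M φ t := by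
  induction φ with
  | atom => exact hts.trans
  | bot => exact Set.subset_eq_empty hts
  | and φ ψ ih₁ ih₂ => exact And.imp ih₁ ih₂
  | impl => exact fun h u hut => h u (hut.trans hts)
  | ior φ ψ ih₁ ih₂ => exact Or.imp ih₁ ih₂
  | box | boxplus => exact fun h w hw => h w (hts hw)

theorem support_empty (φ : InqForm P) : support M φ ∅ := by
  induction φ with
  | atom => exact Set.empty_subset _
  | bot => rfl
  | and _ _ ih₁ ih₂ => exact ⟨ih₁, ih₂⟩
  | impl _ _ _ ih => intro t ht _; rwa [Set.subset_empty_iff.1 ht]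
  | ior _ _ ih _ => exact Or.inl ih
  | box | boxplus => exact fun w hw => hw.elim

theorem support_of_forall_singleton {φ : InqForm P} (hφ : flatGrade φ = 0) {s : Set W}
    (h : ∀ w ∈ s, support M φ {w}) : support M φ s := by
  induction φ generalizing s with
  | atom => exact fun w hw => h w hw rfl
  | bot => exact Set.eq_empty_of_forall_notMem fun w hw => Set.singleton_ne_empty w (h w hw)
  | and φ ψ ih₁ ih₂ =>
    rw [flatGrade, Nat.max_eq_zero_iff] at hφ
    exact ⟨ih₁ hφ.1 fun w hw => (h w hw).1, ih₂ hφ.2 fun w hw => (h w hw).2⟩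
  | impl φ ψ _ ih =>
    exact fun t hts ht => ih hφ fun w hw =>
      h w (hts hw) {w} subset_rfl (support_anti (Set.singleton_subset_iff.2 hw) ht)
  | ior => simp [flatGrade] at hφ
  | box | boxplus => exact fun w hw => h w hw w rfl

theorem support_iff_forall_singleton {φ : InqForm P} (hφ : flatGrade φ = 0) {s : Set W} :
    support M φ s ↔ ∀ w ∈ s, support M φ {w} :=
  ⟨fun h _ hw => support_anti (Set.singleton_subset_iff.2 hw) h, support_of_forall_singleton hφ⟩

theorem support_impl_singleton {φ ψ : InqForm P} {w : W} :
    support M (.impl φ ψ) {w} ↔ (support M φ {w} → support M ψ {w}) := by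
  refine ⟨fun h => h {w} subset_rfl, fun h t ht => ?_⟩
  rcases Set.subset_singleton_iff_eq.1 ht with rfl | rfl
  · exact fun _ => support_empty ψ
  · exact h

end Support

section Resolutions

variable {P W : Type} {M : PseudoModel P W}

def top : InqForm P := .impl .bot .bot

theorem support_top (s : Set W) : support M (top : InqForm P) s := fun _ _ => id

def andRes (A B : List (InqForm P)) : List (InqForm P) :=
  A.flatMap fun a => B.map (.and a)

theorem forall_mem_andRes {p : InqForm P → Prop} {A B : List (InqForm P)} :
    (∀ χ ∈ andRes A B, p χ) ↔ ∀ a ∈ A, ∀ b ∈ B, p (.and a b) := by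
  simp only [andRes, List.forall_mem_flatMap, List.forall_mem_map]

theorem exists_mem_andRes_support {A B : List (InqForm P)} {s : Set W} :
    (∃ χ ∈ andRes A B, support M χ s) ↔
      (∃ a ∈ A, support M a s) ∧ ∃ b ∈ B, support M b s := by
  simp only [andRes, List.mem_flatMap, List.mem_map]
  constructor
  · rintro ⟨_, ⟨a, ha, b, hb, rfl⟩, hab⟩
    exact ⟨⟨a, ha, hab.1⟩, b, hb, hab.2⟩
  · rintro ⟨⟨a, ha, hsa⟩, b, hb, hsb⟩
    exact ⟨_, ⟨a, ha, b, hb, rfl⟩, hsa, hsb⟩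

/-- For `A = [a₁, …, aₙ]`, the formulas `(a₁ → b₁) ∧ (… ∧ ((aₙ → bₙ) ∧ ⊤))` with all `bₖ ∈ B`,
one for each choice function `A → B`. -/
def implRes : List (InqForm P) → List (InqForm P) → List (InqForm P)
  | [], _ => [top]
  | a :: A, B => andRes (B.map (.impl a)) (implRes A B)

theorem forall_mem_implRes {p : InqForm P → Prop} (htop : p top)
    (hand : ∀ χ ξ, p χ → p ξ → p (.and χ ξ)) {A B : List (InqForm P)}
    (himpl : ∀ a ∈ A, ∀ b ∈ B, p (.impl a b)) : ∀ χ ∈ implRes A B, p χ := by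
  induction A with
  | nil => simpa [implRes] using htop
  | cons a A ih =>
    simp only [implRes, forall_mem_andRes, List.forall_mem_map]
    simp only [List.mem_cons, forall_eq_or_imp] at himpl
    exact fun b hb χ hχ => hand _ _ (himpl.1 b hb) (ih himpl.2 χ hχ)

theorem exists_mem_implRes_support {A B : List (InqForm P)} {s : Set W} :
    (∃ χ ∈ implRes A B, support M χ s) ↔ ∀ a ∈ A, ∃ b ∈ B, support M (.impl a b) s := by
  induction A with
  | nil => simp [implRes, support_top]
  | cons a A ih => simp [implRes, exists_mem_andRes_support, ih]

theorem support_impl_iff_of_flat {φ ψ : InqForm P} {A B : List (InqForm P)}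
    (hA : ∀ α ∈ A, flatGrade α = 0) (hφ : ∀ t : Set W, support M φ t ↔ ∃ α ∈ A, support M α t)
    (hψ : ∀ t : Set W, support M ψ t ↔ ∃ β ∈ B, support M β t) {s : Set W} :
    support M (.impl φ ψ) s ↔ ∀ α ∈ A, ∃ β ∈ B, support M (.impl α β) s := by
  refine ⟨fun h α hα => ?_, fun h t hts htφ => ?_⟩
  · -- by flatness, `t` is the largest substate of `s` supporting `α`
    let t := {w ∈ s | support M α {w}}
    have htα : support M α t := support_of_forall_singleton (hA α hα) fun w hw => hw.2
    obtain ⟨β, hβ, htβ⟩ := (hψ t).1 (h t (fun w hw => hw.1) ((hφ t).2 ⟨α, hα, htα⟩))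
    refine ⟨β, hβ, fun u hus huα => support_anti (s := t) (fun w hw => ⟨hus hw, ?_⟩) htβ⟩
    exact support_anti (Set.singleton_subset_iff.2 hw) huα
  · obtain ⟨α, hα, htα⟩ := (hφ t).1 htφ
    obtain ⟨β, hβ, hαβ⟩ := h α hα
    exact (hψ t).2 ⟨β, hβ, hαβ t hts htα⟩

def resolutions : InqForm P → List (InqForm P)
  | .and φ ψ => andRes (resolutions φ) (resolutions ψ)
  | .impl φ ψ => implRes (resolutions φ) (resolutions ψ)
  | .ior φ ψ => resolutions φ ++ resolutions ψ
  | φ => [φ]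

theorem forall_mem_resolutions {p : InqForm P → Prop} (hatom : ∀ q, p (atom q)) (hbot : p bot)
    (hand : ∀ χ ξ, p χ → p ξ → p (.and χ ξ)) (himpl : ∀ χ ξ, p χ → p ξ → p (.impl χ ξ))
    (hbox : ∀ φ, (∀ α ∈ resolutions φ, p α) → p (box φ))
    (hboxplus : ∀ φ, (∀ α ∈ resolutions φ, p α) → p (boxplus φ)) (φ : InqForm P) :
    ∀ α ∈ resolutions φ, p α := by
  induction φ with
  | atom q => simpa [resolutions] using hatom q
  | bot => simpa [resolutions] using hbot
  | and φ ψ ih₁ ih₂ =>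
    exact forall_mem_andRes.2 fun a ha b hb => hand a b (ih₁ a ha) (ih₂ b hb)
  | impl φ ψ ih₁ ih₂ =>
    exact forall_mem_implRes (himpl _ _ hbot hbot) hand
      fun a ha b hb => himpl a b (ih₁ a ha) (ih₂ b hb)
  | ior φ ψ ih₁ ih₂ => exact List.forall_mem_append.2 ⟨ih₁, ih₂⟩
  | box φ ih => simpa [resolutions] using hbox φ ih
  | boxplus φ ih => simpa [resolutions] using hboxplus φ ih

theorem flatGrade_of_mem_resolutions {φ α : InqForm P} (hα : α ∈ resolutions φ) :
    flatGrade α = 0 :=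
  forall_mem_resolutions (p := fun α => flatGrade α = 0) (fun _ => rfl) rfl
    (fun _ _ h₁ h₂ => by simp [flatGrade, h₁, h₂]) (fun _ _ _ h => h)
    (fun _ _ => rfl) (fun _ _ => rfl) φ α hα

theorem support_iff_exists_mem_resolutions (φ : InqForm P) (s : Set W) :
    support M φ s ↔ ∃ α ∈ resolutions φ, support M α s := by
  induction φ generalizing s with
  | and φ ψ ih₁ ih₂ => rw [resolutions, exists_mem_andRes_support, ← ih₁, ← ih₂]; rfl
  | impl φ ψ ih₁ ih₂ =>
    rw [resolutions, exists_mem_implRes_support,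
      support_impl_iff_of_flat (fun _ => flatGrade_of_mem_resolutions) ih₁ ih₂]
  | ior φ ψ ih₁ ih₂ =>
    simp only [resolutions, List.mem_append, or_and_right, exists_or, ← ih₁, ← ih₂]; rfl
  | _ => simp [resolutions]

end Resolutions

theorem forall_eventually_iff_eventually_forall {ι : Type*} {β : ι → Type*}
    [∀ i, Nonempty (β i)] (U : Ultrafilter ι) {p : ∀ i, β i → Prop} :
    (∀ f : ∀ i, β i, ∀ᶠ i in U, p i (f i)) ↔ ∀ᶠ i in U, ∀ b, p i b := by
  have := skolem (F := (U : Filter ι)) (P := fun i b => ¬ p i b)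
  simp only [← not_forall, Ultrafilter.eventually_not] at this
  exact not_iff_not.1 this.symm

section Ultraproduct

variable {P I : Type} (U : Ultrafilter I) {W : I → Type} (M : ∀ i, PseudoModel P (W i))

def ultraState (g : ∀ i, Set (W i)) : Set (∀ i, W i) := {f | ∀ᶠ i in U, f i ∈ g i}

-- Worlds are not identified modulo `U`: Łoś's theorem below does not need the quotient.
def ultraproduct : PseudoModel P (∀ i, W i) where
  Sig f := ultraState U '' {g | ∀ᶠ i in U, g i ∈ (M i).Sig (f i)}
  Sig_nonempty f := Set.Nonempty.image _
    ⟨fun i => ((M i).Sig_nonempty (f i)).some, .of_forall fun _ => Set.Nonempty.some_mem _⟩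
  V p := {f | ∀ᶠ i in U, f i ∈ (M i).V p}

theorem sigma_ultraproduct (f : ∀ i, W i) :
    (ultraproduct U M).sigma f = ultraState U fun i => (M i).sigma (f i) := by
  ext x
  simp only [PseudoModel.sigma, ultraproduct, ultraState, Set.sUnion_image, Set.mem_iUnion,
    Set.mem_ofPred_eq, Set.mem_sUnion, exists_prop, ← eventually_and]
  exact (skolem (P := fun i t => t ∈ (M i).Sig (f i) ∧ x i ∈ t)).symm

def LosAtWorlds (φ : InqForm P) : Prop :=
  ∀ f : ∀ i, W i, support (ultraproduct U M) φ {f} ↔ ∀ᶠ i in U, support (M i) φ {f i}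

def LosAtStates (φ : InqForm P) : Prop :=
  ∀ g : ∀ i, Set (W i),
    support (ultraproduct U M) φ (ultraState U g) ↔ ∀ᶠ i in U, support (M i) φ (g i)

variable {U M}

theorem losAtWorlds_atom (q : P) : LosAtWorlds U M (atom q) := fun f => by
  simp only [support, Set.singleton_subset_iff]; rfl

theorem losAtWorlds_bot : LosAtWorlds U M bot := fun f => by
  simpa [support] using U.neBot.ne

theorem LosAtWorlds.and {φ ψ : InqForm P} (hφ : LosAtWorlds U M φ) (hψ : LosAtWorlds U M ψ) :
    LosAtWorlds U M (.and φ ψ) := fun f => by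
  simp only [support, hφ f, hψ f, eventually_and]

theorem LosAtWorlds.impl {φ ψ : InqForm P} (hφ : LosAtWorlds U M φ) (hψ : LosAtWorlds U M ψ) :
    LosAtWorlds U M (.impl φ ψ) := fun f => by
  simp only [support_impl_singleton, hφ f, hψ f, Ultrafilter.eventually_imp]

theorem LosAtStates.losAtWorlds_box {φ : InqForm P} (h : LosAtStates U M φ) :
    LosAtWorlds U M (box φ) := fun f => by
  simp only [support, Set.mem_singleton_iff, forall_eq, sigma_ultraproduct]
  exact h _

theorem LosAtStates.losAtWorlds_boxplus {φ : InqForm P} (h : LosAtStates U M φ) :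
    LosAtWorlds U M (boxplus φ) := fun f =>
  calc support (ultraproduct U M) (boxplus φ) {f}
      ↔ ∀ g : ∀ i, Set (W i), (∀ᶠ i in U, g i ∈ (M i).Sig (f i)) →
          ∀ᶠ i in U, support (M i) φ (g i) := by
        simp only [support, Set.mem_singleton_iff, forall_eq]
        exact Set.forall_mem_image.trans (forall_congr' fun g => imp_congr_right fun _ => h g)
    _ ↔ ∀ g : ∀ i, Set (W i), ∀ᶠ i in U, g i ∈ (M i).Sig (f i) → support (M i) φ (g i) := by
        simp only [Ultrafilter.eventually_imp]
    _ ↔ ∀ᶠ i in U, support (M i) (boxplus φ) {f i} := by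
        simp only [support, Set.mem_singleton_iff, forall_eq]
        exact forall_eventually_iff_eventually_forall U
          (p := fun i t => t ∈ (M i).Sig (f i) → support (M i) φ t)

theorem LosAtWorlds.losAtStates_of_flat [∀ i, Nonempty (W i)] {α : InqForm P}
    (hα : flatGrade α = 0) (h : LosAtWorlds U M α) : LosAtStates U M α := fun g =>
  calc support (ultraproduct U M) α (ultraState U g)
      ↔ ∀ f : ∀ i, W i, (∀ᶠ i in U, f i ∈ g i) → ∀ᶠ i in U, support (M i) α {f i} := by
        rw [support_iff_forall_singleton hα]
        simp only [ultraState, Set.mem_ofPred_eq, h _]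
    _ ↔ ∀ f : ∀ i, W i, ∀ᶠ i in U, f i ∈ g i → support (M i) α {f i} := by
        simp only [Ultrafilter.eventually_imp]
    _ ↔ ∀ᶠ i in U, ∀ w ∈ g i, support (M i) α {w} :=
        forall_eventually_iff_eventually_forall U (p := fun i w => w ∈ g i → support (M i) α {w})
    _ ↔ ∀ᶠ i in U, support (M i) α (g i) :=
        eventually_congr (.of_forall fun _ => (support_iff_forall_singleton hα).symm)

theorem losAtStates_of_forall_mem_resolutions [∀ i, Nonempty (W i)] {φ : InqForm P}
    (h : ∀ α ∈ resolutions φ, LosAtWorlds U M α) : LosAtStates U M φ := fun g =>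
  calc support (ultraproduct U M) φ (ultraState U g)
      ↔ ∃ α ∈ resolutions φ, ∀ᶠ i in U, support (M i) α (g i) := by
        rw [support_iff_exists_mem_resolutions]
        exact exists_congr fun α => and_congr_right fun hα =>
          (h α hα).losAtStates_of_flat (flatGrade_of_mem_resolutions hα) g
    _ ↔ ∀ᶠ i in U, ∃ α ∈ resolutions φ, support (M i) α (g i) :=
        (Ultrafilter.eventually_exists_mem_iff (resolutions φ).finite_toSet).symm
    _ ↔ ∀ᶠ i in U, support (M i) φ (g i) := by
        simp only [← support_iff_exists_mem_resolutions]

theorem losAtWorlds_of_mem_resolutions [∀ i, Nonempty (W i)] (φ : InqForm P) :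
    ∀ α ∈ resolutions φ, LosAtWorlds U M α :=
  forall_mem_resolutions losAtWorlds_atom losAtWorlds_bot (fun _ _ => .and) (fun _ _ => .impl)
    (fun _ h => (losAtStates_of_forall_mem_resolutions h).losAtWorlds_box)
    (fun _ h => (losAtStates_of_forall_mem_resolutions h).losAtWorlds_boxplus) φ

theorem support_ultraproduct_ultraState [∀ i, Nonempty (W i)] (φ : InqForm P)
    (g : ∀ i, Set (W i)) :
    support (ultraproduct U M) φ (ultraState U g) ↔ ∀ᶠ i in U, support (M i) φ (g i) :=
  losAtStates_of_forall_mem_resolutions (losAtWorlds_of_mem_resolutions φ) g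

end Ultraproduct

end InqML

open InqML Filter

theorem inqml_compactness_pseudo {P : Type} (Φ : Set (InqForm P)) :
    (∃ (W : Type) (M : PseudoModel P W) (s : Set W),
        s.Nonempty ∧ ∀ φ ∈ Φ, support M φ s) ↔
      ∀ Φ₀ ⊆ Φ, Φ₀.Finite →
        ∃ (W : Type) (M : PseudoModel P W) (s : Set W),
          s.Nonempty ∧ ∀ φ ∈ Φ₀, support M φ s := by
  refine ⟨fun ⟨W, M, s, hs, h⟩ Φ₀ hΦ₀ _ => ⟨W, M, s, hs, fun φ hφ => h φ (hΦ₀ hφ)⟩, fun h => ?_⟩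
  choose W M s hs hM using fun Φ₀ : Finset Φ =>
    h (Subtype.val '' (Φ₀ : Set Φ)) (Subtype.coe_image_subset _ _) (Φ₀.finite_toSet.image _)
  have : ∀ Φ₀, Nonempty (W Φ₀) := fun Φ₀ => (hs Φ₀).to_subtype.map Subtype.val
  let U := Ultrafilter.of (atTop : Filter (Finset Φ))
  refine ⟨_, ultraproduct U M, ultraState U s,
    ⟨fun Φ₀ => (hs Φ₀).some, .of_forall fun Φ₀ => (hs Φ₀).some_mem⟩, fun φ hφ => ?_⟩
  rw [support_ultraproduct_ultraState]
  filter_upwards [Ultrafilter.of_le _ (eventually_ge_atTop {⟨φ, hφ⟩})] with Φ₀ hΦ₀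
  exact hM Φ₀ φ ⟨⟨φ, hφ⟩, hΦ₀ (Finset.mem_singleton_self _), rfl⟩
end

section
/- Compactness of INQML over proper models: a set Φ ⊆ INQML is satisfiable at a nonempty state of some inquisitive model (with downward-closed inquisitive assignments) iff every finite subset is. In particular, satisfiability over pseudo-models coincides with satisfiability over models. -/
/-!
Every formula is equivalent to the inquisitive disjunction of its finitely many resolutions,
which are flat: a state supports a flat formula iff each of its worlds does. So support at a
state becomes first-order expressible over structures whose elements code both worlds and states,
with a standard translation by recursion on modal depth. A pseudo-model with a state yields
such a structure, and any such structure yields an inquisitive model (its `Σ(w)` are taken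
downward closed) with the same support; first-order compactness then turns finitely satisfiable
sets into sets satisfiable in an inquisitive model, and since every finite subset of a set
satisfiable in a pseudo-model is again satisfiable, the same argument trades pseudo-models for
models.
-/

theorem forall_fin_one_fun {D : Type*} {p : (Fin 1 → D) → Prop} :
    (∀ i, p i) ↔ ∀ t, p fun _ => t :=
  ⟨fun h _ => h _, fun h i => (funext fun j => congrArg i (Subsingleton.elim 0 j) :
    (fun _ => i 0) = i) ▸ h (i 0)⟩

theorem exists_fin_one_fun {D : Type*} {p : (Fin 1 → D) → Prop} :
    (∃ i, p i) ↔ ∃ t, p fun _ => t :=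
  ⟨fun ⟨i, h⟩ => ⟨i 0, (funext fun j => congrArg i (Subsingleton.elim j 0) :
    i = fun _ => i 0) ▸ h⟩, fun ⟨_, h⟩ => ⟨_, h⟩⟩

namespace List

variable {α : Type*} {L : List (List α)} {f : List α}

theorem exists_mem_sections_forall {p : α → Prop} (h : ∀ l ∈ L, ∃ a ∈ l, p a) :
    ∃ f ∈ L.sections, ∀ a ∈ f, p a := by
  induction L with
  | nil => exact ⟨[], by simp⟩
  | cons l L ih =>
    obtain ⟨a, hal, hpa⟩ := h l mem_cons_self
    obtain ⟨f, hf, hpf⟩ := ih fun l' hl' => h l' (mem_cons_of_mem _ hl')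
    exact ⟨a :: f, mem_sections.2 (.cons hal (mem_sections.1 hf)), forall_mem_cons.2 ⟨hpa, hpf⟩⟩

theorem exists_mem_inter_of_mem_sections (hf : f ∈ L.sections) {l : List α} (hl : l ∈ L) :
    ∃ a ∈ f, a ∈ l := by
  induction mem_sections.1 hf with
  | nil => simp at hl
  | @cons a l' f L hal' _ ih =>
    rcases mem_cons.1 hl with rfl | hl
    · exact ⟨a, mem_cons_self, hal'⟩
    · obtain ⟨b, hbf, hbl⟩ := ih (mem_sections.2 ‹_›) hl
      exact ⟨b, mem_cons_of_mem _ hbf, hbl⟩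

theorem exists_mem_of_mem_sections (hf : f ∈ L.sections) {a : α} (ha : a ∈ f) :
    ∃ l ∈ L, a ∈ l := by
  induction mem_sections.1 hf with
  | nil => simp at ha
  | @cons b l f L hbl _ ih =>
    rcases mem_cons.1 ha with rfl | ha
    · exact ⟨l, mem_cons_self, hbl⟩
    · obtain ⟨l', hl', hal'⟩ := ih (mem_sections.2 ‹_›) ha
      exact ⟨l', mem_cons_of_mem _ hl', hal'⟩

end List

namespace InqForm

variable {P : Type}

def top : InqForm P := .impl .bot .bot

def conj (l : List (InqForm P)) : InqForm P := l.foldr .and top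

def mdepth : InqForm P → ℕ
  | .atom _ | .bot => 0
  | .and φ ψ | .impl φ ψ | .ior φ ψ => max φ.mdepth ψ.mdepth
  | .box φ | .boxplus φ => φ.mdepth + 1

inductive Flat : InqForm P → Prop
  | atom (p : P) : Flat (.atom p)
  | bot : Flat .bot
  | and {φ ψ : InqForm P} : Flat φ → Flat ψ → Flat (.and φ ψ)
  | impl {φ ψ : InqForm P} : Flat φ → Flat ψ → Flat (.impl φ ψ)
  | box (φ : InqForm P) : Flat (.box φ)
  | boxplus (φ : InqForm P) : Flat (.boxplus φ)

theorem Flat.conj {l : List (InqForm P)} (h : ∀ γ ∈ l, γ.Flat) : (conj l).Flat := by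
  induction l with
  | nil => exact .impl .bot .bot
  | cons γ l ih =>
    exact .and (h γ List.mem_cons_self) (ih fun δ hδ => h δ (List.mem_cons_of_mem _ hδ))

theorem mdepth_conj {l : List (InqForm P)} {n : ℕ} (h : ∀ γ ∈ l, γ.mdepth ≤ n) :
    (conj l).mdepth ≤ n := by
  induction l with
  | nil => exact Nat.zero_le n
  | cons γ l ih =>
    exact max_le (h γ List.mem_cons_self) (ih fun δ hδ => h δ (List.mem_cons_of_mem _ hδ))

/-- For `φ → ψ`, a section chooses for every resolution `α` of `φ` an implication `α → β` with
`β` a resolution of `ψ`. -/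
def resolutions : InqForm P → List (InqForm P)
  | .atom p => [.atom p]
  | .bot => [.bot]
  | .and φ ψ => φ.resolutions.flatMap fun α => ψ.resolutions.map (.and α)
  | .impl φ ψ =>
      (φ.resolutions.map fun α => ψ.resolutions.map (.impl α)).sections.map conj
  | .ior φ ψ => φ.resolutions ++ ψ.resolutions
  | .box φ => [.box φ]
  | .boxplus φ => [.boxplus φ]

theorem mem_resolutions_impl {φ ψ γ : InqForm P} :
    γ ∈ (impl φ ψ).resolutions ↔
      ∃ f ∈ (φ.resolutions.map fun α => ψ.resolutions.map (.impl α)).sections, γ = conj f := by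
  simp [resolutions, eq_comm]

theorem Flat.of_mem_resolutions : ∀ {φ α : InqForm P}, α ∈ φ.resolutions → α.Flat
  | .atom p, _, h => by simp_all [resolutions, Flat.atom]
  | .bot, _, h => by simp_all [resolutions, Flat.bot]
  | .and φ ψ, _, h => by
    simp only [resolutions, List.mem_flatMap, List.mem_map] at h
    obtain ⟨α, hα, β, hβ, rfl⟩ := h
    exact .and (of_mem_resolutions hα) (of_mem_resolutions hβ)
  | .impl φ ψ, _, h => by
    obtain ⟨f, hf, rfl⟩ := mem_resolutions_impl.1 h
    refine .conj fun γ hγ => ?_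
    obtain ⟨l, hl, hγl⟩ := List.exists_mem_of_mem_sections hf hγ
    obtain ⟨α, hα, rfl⟩ := List.mem_map.1 hl
    obtain ⟨β, hβ, rfl⟩ := List.mem_map.1 hγl
    exact .impl (of_mem_resolutions hα) (of_mem_resolutions hβ)
  | .ior φ ψ, _, h => by
    rcases List.mem_append.1 h with h | h
    exacts [of_mem_resolutions h, of_mem_resolutions h]
  | .box φ, _, h => by simp_all [resolutions, Flat.box]
  | .boxplus φ, _, h => by simp_all [resolutions, Flat.boxplus]

theorem mdepth_le_of_mem_resolutions : ∀ {φ α : InqForm P}, α ∈ φ.resolutions → α.mdepth ≤ φ.mdepth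
  | .atom p, _, h => by simp_all [resolutions]
  | .bot, _, h => by simp_all [resolutions]
  | .and φ ψ, _, h => by
    simp only [resolutions, List.mem_flatMap, List.mem_map] at h
    obtain ⟨α, hα, β, hβ, rfl⟩ := h
    exact max_le_max (mdepth_le_of_mem_resolutions hα) (mdepth_le_of_mem_resolutions hβ)
  | .impl φ ψ, _, h => by
    obtain ⟨f, hf, rfl⟩ := mem_resolutions_impl.1 h
    refine mdepth_conj fun γ hγ => ?_
    obtain ⟨l, hl, hγl⟩ := List.exists_mem_of_mem_sections hf hγ
    obtain ⟨α, hα, rfl⟩ := List.mem_map.1 hl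
    obtain ⟨β, hβ, rfl⟩ := List.mem_map.1 hγl
    exact max_le_max (mdepth_le_of_mem_resolutions hα) (mdepth_le_of_mem_resolutions hβ)
  | .ior φ ψ, _, h => by
    rcases List.mem_append.1 h with h | h
    · exact le_max_of_le_left (mdepth_le_of_mem_resolutions h)
    · exact le_max_of_le_right (mdepth_le_of_mem_resolutions h)
  | .box φ, _, h => by simp_all [resolutions]
  | .boxplus φ, _, h => by simp_all [resolutions]

end InqForm

namespace PseudoModel

open InqForm

variable {P W : Type} (M : PseudoModel P W)

theorem support_empty : ∀ φ : InqForm P, support M φ ∅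
  | .atom _ => Set.empty_subset _
  | .bot => rfl
  | .and φ ψ => ⟨support_empty φ, support_empty ψ⟩
  | .impl _ ψ => fun _ ht _ => Set.subset_empty_iff.1 ht ▸ support_empty ψ
  | .ior φ _ => .inl (support_empty φ)
  | .box _ => fun _ h => h.elim
  | .boxplus _ => fun _ h => h.elim

theorem support_mono :
    ∀ (φ : InqForm P) {s t : Set W}, support M φ s → t ⊆ s → support M φ t
  | .atom _, _, _, h, hts => hts.trans h
  | .bot, _, _, h, hts => Set.subset_empty_iff.1 (h ▸ hts)
  | .and φ ψ, _, _, h, hts => ⟨support_mono φ h.1 hts, support_mono ψ h.2 hts⟩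
  | .impl _ _, _, _, h, hts => fun u hu => h u (hu.trans hts)
  | .ior φ ψ, _, _, h, hts => h.imp (support_mono φ · hts) (support_mono ψ · hts)
  | .box _, _, _, h, hts => fun w hw => h w (hts hw)
  | .boxplus _, _, _, h, hts => fun w hw => h w (hts hw)

theorem support_impl_singleton {φ ψ : InqForm P} {w : W} :
    support M (.impl φ ψ) {w} ↔ (support M φ {w} → support M ψ {w}) := by
  refine ⟨fun h => h {w} subset_rfl, fun h t ht hφ => ?_⟩
  rcases Set.subset_singleton_iff_eq.1 ht with rfl | rfl
  exacts [M.support_empty ψ, h hφ]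

theorem support_iff_forall_singleton_of_flat {α : InqForm P} (hα : α.Flat) {s : Set W} :
    support M α s ↔ ∀ w ∈ s, support M α {w} := by
  refine ⟨fun h w hw => M.support_mono α h (Set.singleton_subset_iff.2 hw), ?_⟩
  induction hα generalizing s with
  | atom p => exact fun h w hw => Set.singleton_subset_iff.1 (h w hw)
  | bot =>
    exact fun h => Set.eq_empty_iff_forall_notMem.2 fun w hw => Set.singleton_ne_empty w (h w hw)
  | and _ _ ihφ ihψ => exact fun h => ⟨ihφ fun w hw => (h w hw).1, ihψ fun w hw => (h w hw).2⟩
  | @impl φ ψ _ _ _ ihψ =>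
    intro h t hts hφ
    exact ihψ fun w hw => M.support_impl_singleton.1 (h w (hts hw))
      (M.support_mono φ hφ (Set.singleton_subset_iff.2 hw))
  | box φ => exact fun h w hw => h w hw w rfl
  | boxplus φ => exact fun h w hw => h w hw w rfl

theorem support_conj {l : List (InqForm P)} {s : Set W} :
    support M (conj l) s ↔ ∀ γ ∈ l, support M γ s := by
  induction l with
  | nil => exact iff_of_true (fun t _ h => h ▸ M.support_empty .bot) (by simp)
  | cons γ l ih => simp only [conj, List.foldr_cons, List.forall_mem_cons, ← ih]; rfl

theorem support_iff_exists_resolution :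
    ∀ (φ : InqForm P) (s : Set W), support M φ s ↔ ∃ α ∈ φ.resolutions, support M α s
  | .atom p, s => by simp [resolutions]
  | .bot, s => by simp [resolutions]
  | .and φ ψ, s => by
    simp only [support, resolutions, List.mem_flatMap, List.mem_map,
      support_iff_exists_resolution φ s, support_iff_exists_resolution ψ s]
    constructor
    · rintro ⟨⟨α, hα, hαs⟩, β, hβ, hβs⟩
      exact ⟨.and α β, ⟨α, hα, β, hβ, rfl⟩, hαs, hβs⟩
    · rintro ⟨_, ⟨α, hα, β, hβ, rfl⟩, hαs, hβs⟩
      exact ⟨⟨α, hα, hαs⟩, β, hβ, hβs⟩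
  | .impl φ ψ, s => by
    simp only [mem_resolutions_impl]
    constructor
    · intro h
      have hdom : ∀ l ∈ φ.resolutions.map fun α => ψ.resolutions.map (.impl α),
          ∃ γ ∈ l, support M γ s := by
        simp only [List.mem_map, forall_exists_index, and_imp]
        rintro _ α hα rfl
        -- `α` is supported exactly on the subsets of the set of worlds where it holds
        let tα : Set W := {w ∈ s | support M α {w}}
        have htα : support M α tα :=
          (M.support_iff_forall_singleton_of_flat (.of_mem_resolutions hα)).2 fun w hw => hw.2
        obtain ⟨β, hβ, hβt⟩ := (support_iff_exists_resolution ψ tα).1 <|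
          h tα (fun w hw => hw.1) ((support_iff_exists_resolution φ tα).2 ⟨α, hα, htα⟩)
        refine ⟨.impl α β, List.mem_map_of_mem hβ, fun t hts hαt =>
          M.support_mono β hβt fun w hw => ⟨hts hw, ?_⟩⟩
        exact M.support_mono α hαt (Set.singleton_subset_iff.2 hw)
      obtain ⟨f, hf, hfs⟩ := List.exists_mem_sections_forall hdom
      exact ⟨conj f, ⟨f, hf, rfl⟩, M.support_conj.2 hfs⟩
    · rintro ⟨_, ⟨f, hf, rfl⟩, hfs⟩ t hts hφt
      obtain ⟨α, hα, hαt⟩ := (support_iff_exists_resolution φ t).1 hφt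
      obtain ⟨γ, hγf, hγ⟩ := List.exists_mem_inter_of_mem_sections hf (List.mem_map_of_mem hα)
      obtain ⟨β, hβ, rfl⟩ := List.mem_map.1 hγ
      exact (support_iff_exists_resolution ψ t).2 ⟨β, hβ, M.support_conj.1 hfs _ hγf t hts hαt⟩
  | .ior φ ψ, s => by
    simp only [support, resolutions, List.mem_append, or_and_right, exists_or,
      support_iff_exists_resolution φ s, support_iff_exists_resolution ψ s]
  | .box φ, s => by simp [resolutions]
  | .boxplus φ, s => by simp [resolutions]

theorem support_iff_exists_resolution_forall_singleton (φ : InqForm P) (s : Set W) :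
    support M φ s ↔ ∃ α ∈ φ.resolutions, ∀ w ∈ s, support M α {w} := by
  rw [support_iff_exists_resolution]
  exact exists_congr fun α => and_congr_right fun hα =>
    M.support_iff_forall_singleton_of_flat (.of_mem_resolutions hα)

theorem forall_mem_downClose_support {φ : InqForm P} {Pi : Set (Set W)} :
    (∀ u ∈ downClose Pi, support M φ u) ↔ ∀ u ∈ Pi, support M φ u :=
  ⟨fun h u hu => h u ⟨u, hu, subset_rfl⟩, fun h _ ⟨u, hu, htu⟩ => M.support_mono φ (h u hu) htu⟩

def IsInquisitive : Prop :=
  ∀ w, ∀ u ∈ M.Sig w, ∀ t ⊆ u, t ∈ M.Sig w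

end PseudoModel

namespace InqML

open FirstOrder Language Structure InqForm

inductive Const : ℕ → Type
  | designated : Const 0

inductive Rel (P : Type) : ℕ → Type
  | atom : P → Rel P 1
  | mem : Rel P 2
  | assign : Rel P 2

/-- Every element of a structure is a world and at the same time the code of the state
`{v | mem v t}`; `assign w t` says that this state lies in `Σ(w)`, and the constant names the
state of evaluation. -/
abbrev lang (P : Type) : Language := ⟨Const, Rel P⟩

variable (P : Type) {D : Type} [(lang P).Structure D]

def stateOf (t : D) : Set D := {v | RelMap (L := lang P) Rel.mem ![v, t]}

def sigmaOf (w : D) : Set D := {v | ∃ t, RelMap (L := lang P) Rel.assign ![w, t] ∧ v ∈ stateOf P t}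

variable (D) in
def designatedState : Set D :=
  stateOf P (constantMap (L := lang P) Const.designated)

variable (D) in
noncomputable def toPseudoModel : PseudoModel P D where
  Sig w := downClose (insert ∅ (stateOf P '' {t | RelMap (L := lang P) Rel.assign ![w, t]}))
  Sig_nonempty _ := ⟨∅, ∅, Set.mem_insert _ _, subset_rfl⟩
  V p := {w | RelMap (L := lang P) (Rel.atom p) ![w]}

theorem toPseudoModel_sigma (w : D) : (toPseudoModel P D).sigma w = sigmaOf P w := by
  ext v
  simp only [PseudoModel.sigma, toPseudoModel, downClose, Set.mem_sUnion, Set.mem_ofPred_eq,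
    Set.mem_insert_iff, Set.mem_image, sigmaOf]
  constructor
  · rintro ⟨u, ⟨_, rfl | ⟨t, ht, rfl⟩, hu⟩, hv⟩
    exacts [(hu hv).elim, ⟨t, ht, hu hv⟩]
  · rintro ⟨t, ht, hv⟩
    exact ⟨_, ⟨_, .inr ⟨t, ht, rfl⟩, subset_rfl⟩, hv⟩

theorem support_toPseudoModel_boxplus {φ : InqForm P} {w : D} :
    support (toPseudoModel P D) (.boxplus φ) {w} ↔
      ∀ t, RelMap (L := lang P) Rel.assign ![w, t] →
        support (toPseudoModel P D) φ (stateOf P t) := by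
  simp only [support, Set.mem_singleton_iff, forall_eq, toPseudoModel]
  rw [PseudoModel.forall_mem_downClose_support, Set.forall_mem_insert, Set.forall_mem_image]
  exact and_iff_right (PseudoModel.support_empty _ φ)

variable {P}

noncomputable def supportOn {β : Type} (tr : InqForm P → (lang P).Formula (Fin 1))
    (φ : InqForm P) (guard : (lang P).Formula (β ⊕ Fin 1)) : (lang P).Formula β :=
  (φ.resolutions.map fun α =>
    Formula.iAlls (Fin 1) (guard.imp ((tr α).relabel fun _ => .inr 0))).foldr (· ⊔ ·) ⊥

theorem realize_supportOn {β : Type} {tr : InqForm P → (lang P).Formula (Fin 1)}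
    {φ : InqForm P} (htr : ∀ α ∈ φ.resolutions, ∀ v : D,
      (tr α).Realize (fun _ => v) ↔ support (toPseudoModel P D) α {v})
    (guard : (lang P).Formula (β ⊕ Fin 1)) (xs : β → D) :
    (supportOn tr φ guard).Realize xs ↔
      support (toPseudoModel P D) φ {v | guard.Realize (Sum.elim xs fun _ => v)} := by
  rw [PseudoModel.support_iff_exists_resolution_forall_singleton]
  simp only [supportOn, Formula.Realize, BoundedFormula.realize_foldr_sup, List.mem_map,
    exists_exists_and_eq_and]
  refine exists_congr fun α => and_congr_right fun hα => ?_
  rw [← Formula.Realize, Formula.realize_iAlls]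
  simp only [forall_fin_one_fun, Formula.realize_imp, Formula.realize_relabel, Set.mem_ofPred_eq,
    ← htr α hα]
  rfl

/-- `v ∈ σ(x)`, where `x` is the variable `inl 0` and `v` is `inr 0`. -/
noncomputable def inSigma : (lang P).Formula (Fin 1 ⊕ Fin 1) :=
  Formula.iExs (Fin 1)
    (Relations.formula₂ Rel.assign (var (.inl (.inl 0))) (var (.inr 0)) ⊓
      Relations.formula₂ Rel.mem (var (.inl (.inr 0))) (var (.inr 0)))

noncomputable def translateStep (prev : InqForm P → (lang P).Formula (Fin 1)) :
    InqForm P → (lang P).Formula (Fin 1)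
  | .atom p => Relations.formula₁ (Rel.atom p) (var 0)
  | .bot => ⊥
  | .and φ ψ => translateStep prev φ ⊓ translateStep prev ψ
  | .impl φ ψ => (translateStep prev φ).imp (translateStep prev ψ)
  | .ior φ ψ => translateStep prev φ ⊔ translateStep prev ψ
  | .box φ => supportOn prev φ inSigma
  | .boxplus φ => Formula.iAlls (Fin 1)
      ((Relations.formula₂ Rel.assign (var (.inl 0)) (var (.inr 0))).imp
        (supportOn prev φ
          (Relations.formula₂ Rel.mem (var (.inr 0)) (var (.inl (.inr 0))))))

/-- The fuel `n` is needed because the modal clauses recurse into resolutions, which are not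
subformulas; it suffices when it bounds the modal depth. -/
noncomputable def translate : ℕ → InqForm P → (lang P).Formula (Fin 1)
  | 0 => translateStep fun _ => ⊥
  | n + 1 => translateStep (translate n)

theorem realize_inSigma (xs : Fin 1 ⊕ Fin 1 → D) :
    (inSigma (P := P)).Realize xs ↔ xs (.inr 0) ∈ sigmaOf P (xs (.inl 0)) := by
  simp only [inSigma, Formula.realize_iExs, Formula.realize_inf, Formula.realize_rel₂,
    Term.realize_var, Sum.elim_inl, Sum.elim_inr]
  rw [exists_fin_one_fun]
  rfl

theorem realize_translateStep {d : ℕ} {prev : InqForm P → (lang P).Formula (Fin 1)}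
    (hprev : ∀ α : InqForm P, α.mdepth < d → ∀ v : D,
      (prev α).Realize (fun _ => v) ↔ support (toPseudoModel P D) α {v}) :
    ∀ φ : InqForm P, φ.mdepth ≤ d → ∀ w : D,
      (translateStep prev φ).Realize (fun _ => w) ↔ support (toPseudoModel P D) φ {w}
  | .atom p, _, w => by simp [translateStep, support, toPseudoModel]
  | .bot, _, w => by simp [translateStep, support]
  | .and φ ψ, h, w => by
    have ⟨hφ, hψ⟩ := max_le_iff.1 h
    simp only [translateStep, Formula.realize_inf, realize_translateStep hprev φ hφ,
      realize_translateStep hprev ψ hψ, support]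
  | .impl φ ψ, h, w => by
    have ⟨hφ, hψ⟩ := max_le_iff.1 h
    simp only [translateStep, Formula.realize_imp, realize_translateStep hprev φ hφ,
      realize_translateStep hprev ψ hψ, PseudoModel.support_impl_singleton]
  | .ior φ ψ, h, w => by
    have ⟨hφ, hψ⟩ := max_le_iff.1 h
    simp only [translateStep, Formula.realize_sup, realize_translateStep hprev φ hφ,
      realize_translateStep hprev ψ hψ, support]
  | .box φ, h, w => by
    have hres : ∀ α ∈ φ.resolutions, α.mdepth < d := fun α hα =>
      (mdepth_le_of_mem_resolutions hα).trans_lt h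
    rw [translateStep, realize_supportOn (fun α hα => hprev α (hres α hα))]
    simp only [realize_inSigma, support, Set.mem_singleton_iff, forall_eq, toPseudoModel_sigma]
    rfl
  | .boxplus φ, h, w => by
    have hres : ∀ α ∈ φ.resolutions, α.mdepth < d := fun α hα =>
      (mdepth_le_of_mem_resolutions hα).trans_lt h
    rw [support_toPseudoModel_boxplus]
    simp only [translateStep, Formula.realize_iAlls, Formula.realize_imp, Formula.realize_rel₂,
      Term.realize_var, realize_supportOn (fun α hα => hprev α (hres α hα))]
    rw [forall_fin_one_fun]
    rfl

theorem realize_translate :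
    ∀ (n : ℕ) {φ : InqForm P}, φ.mdepth ≤ n → ∀ w : D,
      (translate n φ).Realize (fun _ => w) ↔ support (toPseudoModel P D) φ {w}
  | 0, φ => realize_translateStep (fun _ h => absurd h (Nat.not_lt_zero _)) φ
  | n + 1, φ => realize_translateStep (fun _ h => realize_translate n (Nat.lt_succ_iff.1 h)) φ

variable (P) in
noncomputable def nonemptySentence : (lang P).Sentence :=
  Formula.iExs (Fin 1)
    (Relations.formula₂ Rel.mem (var (.inr 0)) (Constants.term Const.designated))

noncomputable def supportSentence (φ : InqForm P) : (lang P).Sentence :=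
  supportOn (translate φ.mdepth) φ
    (Relations.formula₂ Rel.mem (var (.inr 0)) (Constants.term Const.designated))

theorem realize_nonemptySentence : D ⊨ nonemptySentence P ↔ (designatedState P D).Nonempty := by
  simp only [Sentence.Realize, nonemptySentence, Formula.realize_iExs, exists_fin_one_fun,
    Formula.realize_rel₂, Term.realize_var, Sum.elim_inr, Term.realize_constants]
  rfl

theorem realize_supportSentence (φ : InqForm P) :
    D ⊨ supportSentence φ ↔ support (toPseudoModel P D) φ (designatedState P D) := by
  rw [Sentence.Realize, supportSentence, realize_supportOn fun α hα =>
    realize_translate _ (mdepth_le_of_mem_resolutions hα)]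
  simp only [Formula.realize_rel₂, Term.realize_var, Sum.elim_inr, Term.realize_constants]
  rfl

variable (P) in
def theoryOf (Φ : Set (InqForm P)) : (lang P).Theory :=
  insert (nonemptySentence P) (supportSentence '' Φ)

theorem model_theoryOf_iff {Φ : Set (InqForm P)} :
    D ⊨ theoryOf P Φ ↔
      (designatedState P D).Nonempty ∧
        ∀ φ ∈ Φ, support (toPseudoModel P D) φ (designatedState P D) := by
  rw [theoryOf, Theory.model_insert_iff, realize_nonemptySentence, Theory.model_iff,
    Set.forall_mem_image]
  simp only [realize_supportSentence]

inductive Encoding {W : Type} (M : PseudoModel P W) (s : Set W) : Type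
  | world : W → Encoding M s
  | state : Set W → Encoding M s

namespace Encoding

variable {W : Type} {M : PseudoModel P W} {s : Set W}

def Mem : Encoding M s → Encoding M s → Prop
  | world w, state t => w ∈ t
  | _, _ => False

def Assign : Encoding M s → Encoding M s → Prop
  | world w, state t => t ∈ M.Sig w
  | _, _ => False

def Atom (p : P) : Encoding M s → Prop
  | world w => w ∈ M.V p
  | state _ => False

instance : (lang P).Structure (Encoding M s) where
  funMap | .designated, _ => state s
  RelMap
    | .atom p, xs => Atom p (xs 0)
    | .mem, xs => Mem (xs 0) (xs 1)
    | .assign, xs => Assign (xs 0) (xs 1)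

theorem stateOf_state (t : Set W) : stateOf P (state t : Encoding M s) = world '' t := by
  ext (v | v) <;> simp [stateOf, RelMap, Mem]

theorem designatedState_eq : designatedState P (Encoding M s) = world '' s :=
  stateOf_state s

theorem sigmaOf_world (w : W) :
    sigmaOf P (world w : Encoding M s) = world '' M.sigma w := by
  ext v
  simp only [sigmaOf, Set.mem_ofPred_eq, PseudoModel.sigma]
  constructor
  · rintro ⟨_ | t, ht, hv⟩
    · exact ht.elim
    · rw [stateOf_state] at hv
      exact Set.image_mono (Set.subset_sUnion_of_mem ht) hv
  · rintro ⟨v, ⟨t, ht, hv⟩, rfl⟩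
    exact ⟨state t, ht, by rw [stateOf_state]; exact Set.mem_image_of_mem _ hv⟩

theorem support_boxplus_world {φ : InqForm P} {w : W} :
    support (toPseudoModel P (Encoding M s)) (.boxplus φ) {world w} ↔
      ∀ t ∈ M.Sig w, support (toPseudoModel P (Encoding M s)) φ (world '' t) := by
  rw [support_toPseudoModel_boxplus]
  constructor
  · intro h t ht
    rw [← stateOf_state]
    exact h (state t) ht
  · rintro h (_ | t) ht
    · exact ht.elim
    · rw [stateOf_state]
      exact h t ht

theorem support_image_world :
    ∀ (φ : InqForm P) (u : Set W),
      support (toPseudoModel P (Encoding M s)) φ (world '' u) ↔ support M φ u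
  | .atom p, u => Set.image_subset_iff
  | .bot, u => Set.image_eq_empty
  | .and φ ψ, u => and_congr (support_image_world φ u) (support_image_world ψ u)
  | .ior φ ψ, u => or_congr (support_image_world φ u) (support_image_world ψ u)
  | .impl φ ψ, u => by
    constructor
    · intro h t htu hφ
      rw [← support_image_world ψ]
      exact h _ (Set.image_mono htu) ((support_image_world φ t).2 hφ)
    · intro h t' ht'
      obtain ⟨t, htu, rfl⟩ := Set.subset_image_iff.1 ht'
      rw [support_image_world φ, support_image_world ψ]
      exact h t htu
  | .box φ, u => by
    simp only [support, Set.forall_mem_image, toPseudoModel_sigma, sigmaOf_world,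
      support_image_world φ]
  | .boxplus φ, u => by
    rw [PseudoModel.support_iff_forall_singleton_of_flat _ (.boxplus φ), Set.forall_mem_image]
    simp only [support_boxplus_world, support_image_world φ]
    rfl

end Encoding

def SatisfiableInPseudo (Φ : Set (InqForm P)) : Prop :=
  ∃ (W : Type) (M : PseudoModel P W) (s : Set W), s.Nonempty ∧ ∀ φ ∈ Φ, support M φ s

def SatisfiableInModel (Φ : Set (InqForm P)) : Prop :=
  ∃ (W : Type) (M : PseudoModel P W) (s : Set W),
    M.IsInquisitive ∧ s.Nonempty ∧ ∀ φ ∈ Φ, support M φ s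

theorem SatisfiableInPseudo.mono {Φ Ψ : Set (InqForm P)} (h : SatisfiableInPseudo Φ) (hΨ : Ψ ⊆ Φ) :
    SatisfiableInPseudo Ψ :=
  let ⟨W, M, s, hs, hΦ⟩ := h
  ⟨W, M, s, hs, fun φ hφ => hΦ φ (hΨ hφ)⟩

theorem SatisfiableInModel.mono {Φ Ψ : Set (InqForm P)} (h : SatisfiableInModel Φ) (hΨ : Ψ ⊆ Φ) :
    SatisfiableInModel Ψ :=
  let ⟨W, M, s, hM, hs, hΦ⟩ := h
  ⟨W, M, s, hM, hs, fun φ hφ => hΦ φ (hΨ hφ)⟩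

theorem SatisfiableInModel.satisfiableInPseudo {Φ : Set (InqForm P)} (h : SatisfiableInModel Φ) :
    SatisfiableInPseudo Φ :=
  let ⟨W, M, s, _, hs, hΦ⟩ := h
  ⟨W, M, s, hs, hΦ⟩

theorem toPseudoModel_isInquisitive (D : Type) [(lang P).Structure D] :
    (toPseudoModel P D).IsInquisitive :=
  fun _ _ ⟨v, hv, hu⟩ _ htu => ⟨v, hv, htu.trans hu⟩

theorem isSatisfiable_theoryOf {Φ : Set (InqForm P)} (h : SatisfiableInPseudo Φ) :
    (theoryOf P Φ).IsSatisfiable := by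
  obtain ⟨W, M, s, hs, hΦ⟩ := h
  have : Encoding M s ⊨ theoryOf P Φ := by
    refine model_theoryOf_iff.2 ⟨?_, fun φ hφ => ?_⟩
    · rw [Encoding.designatedState_eq]
      exact hs.image _
    · rw [Encoding.designatedState_eq, Encoding.support_image_world]
      exact hΦ φ hφ
  have : Nonempty (Encoding M s) := ⟨.state s⟩
  exact Theory.Model.isSatisfiable (Encoding M s)

theorem satisfiableInModel_of_isSatisfiable {Φ : Set (InqForm P)}
    (h : (theoryOf P Φ).IsSatisfiable) : SatisfiableInModel Φ := by
  obtain ⟨N⟩ := h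
  obtain ⟨hne, hΦ⟩ := model_theoryOf_iff.1 N.is_model
  exact ⟨N, toPseudoModel P N, designatedState P N, toPseudoModel_isInquisitive N, hne, hΦ⟩

theorem exists_finite_subset_theoryOf {Φ : Set (InqForm P)} {T : (lang P).Theory}
    (hT : T.Finite) (hTΦ : T ⊆ theoryOf P Φ) :
    ∃ Φ₀ ⊆ Φ, Φ₀.Finite ∧ T ⊆ theoryOf P Φ₀ := by
  obtain ⟨Φ₀, hΦ₀, hfin, heq⟩ := Set.exists_subset_image_finite_and.1
    ⟨T \ {nonemptySentence P}, Set.sdiff_singleton_subset_iff.2 hTΦ, hT.sdiff, rfl⟩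
  exact ⟨Φ₀, hΦ₀, hfin, Set.sdiff_singleton_subset_iff.1 heq.le⟩

theorem satisfiableInModel_of_forall_finite {Φ : Set (InqForm P)}
    (h : ∀ Φ₀ ⊆ Φ, Φ₀.Finite → SatisfiableInPseudo Φ₀) : SatisfiableInModel Φ := by
  refine satisfiableInModel_of_isSatisfiable <|
    Theory.isSatisfiable_iff_isFinitelySatisfiable.2 fun T₀ hT₀ => ?_
  obtain ⟨Φ₀, hΦ₀, hfin, hT₀Φ₀⟩ := exists_finite_subset_theoryOf T₀.finite_toSet hT₀
  exact (isSatisfiable_theoryOf (h Φ₀ hΦ₀ hfin)).mono hT₀Φ₀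

end InqML

theorem inqml_compactness_models {P : Type} (Φ : Set (InqForm P)) :
    ((∃ (W : Type) (M : PseudoModel P W) (s : Set W),
        (∀ w, ∀ u ∈ M.Sig w, ∀ t ⊆ u, t ∈ M.Sig w) ∧
          s.Nonempty ∧ ∀ φ ∈ Φ, support M φ s) ↔
      ∀ Φ₀ ⊆ Φ, Φ₀.Finite →
        ∃ (W : Type) (M : PseudoModel P W) (s : Set W),
          (∀ w, ∀ u ∈ M.Sig w, ∀ t ⊆ u, t ∈ M.Sig w) ∧
            s.Nonempty ∧ ∀ φ ∈ Φ₀, support M φ s) ∧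
    ((∃ (W : Type) (M : PseudoModel P W) (s : Set W),
        (∀ w, ∀ u ∈ M.Sig w, ∀ t ⊆ u, t ∈ M.Sig w) ∧
          s.Nonempty ∧ ∀ φ ∈ Φ, support M φ s) ↔
      ∃ (W : Type) (M : PseudoModel P W) (s : Set W),
        s.Nonempty ∧ ∀ φ ∈ Φ, support M φ s) := by
  have weaken (Ψ : Set (InqForm P)) : InqML.SatisfiableInModel Ψ → InqML.SatisfiableInPseudo Ψ :=
    InqML.SatisfiableInModel.satisfiableInPseudo
  have compact := @InqML.satisfiableInModel_of_forall_finite P Φ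
  exact ⟨⟨fun h _ hΦ₀ _ => InqML.SatisfiableInModel.mono h hΦ₀,
      fun h => compact fun Φ₀ hΦ₀ hfin => weaken Φ₀ (h Φ₀ hΦ₀ hfin)⟩,
    weaken Φ, fun h => compact fun _ hΦ₀ _ => InqML.SatisfiableInPseudo.mono h hΦ₀⟩
end

section
/- State-pointed compactness implies world-pointed compactness: if every finite subset of Φ ⊆ INQML is satisfiable at some singleton state {w} of some pseudo-model, then Φ is satisfiable at some singleton state of some pseudo-model. -/
namespace InqCompact

variable {P : Type}

/-- every formula is supported by the empty state -/
lemma support_empty {W : Type} (M : PseudoModel P W) : ∀ φ : InqForm P, support M φ ∅ := by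
  intro φ
  induction φ with
  | atom p => simp [support]
  | bot => simp [support]
  | and φ ψ ihφ ihψ => exact ⟨ihφ, ihψ⟩
  | impl φ ψ ihφ ihψ =>
      intro t ht _
      rw [Set.subset_empty_iff] at ht
      subst ht; exact ihψ
  | ior φ ψ ihφ ihψ => exact Or.inl ihφ
  | box φ ih => intro w hw; exact absurd hw (Set.notMem_empty w)
  | boxplus φ ih => intro w hw; exact absurd hw (Set.notMem_empty w)

/-- persistency -/
lemma support_mono {W : Type} (M : PseudoModel P W) :
    ∀ (φ : InqForm P) {s t : Set W}, support M φ s → t ⊆ s → support M φ t := by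
  intro φ
  induction φ with
  | atom p => intro s t hs hts; exact hts.trans hs
  | bot => intro s t hs hts; rw [hs, Set.subset_empty_iff] at hts; exact hts
  | and φ ψ ihφ ihψ => intro s t hs hts; exact ⟨ihφ hs.1 hts, ihψ hs.2 hts⟩
  | impl φ ψ ihφ ihψ => intro s t hs hts u hu hsu; exact hs u (hu.trans hts) hsu
  | ior φ ψ ihφ ihψ =>
      intro s t hs hts
      rcases hs with hs | hs
      · exact Or.inl (ihφ hs hts)
      · exact Or.inr (ihψ hs hts)
  | box φ ih => intro s t hs hts w hw; exact hs w (hts hw)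
  | boxplus φ ih => intro s t hs hts w hw; exact hs w (hts hw)

/-- semantic flatness -/
def Flat (φ : InqForm P) : Prop :=
  ∀ {W : Type} (M : PseudoModel P W) (s : Set W),
    support M φ s ↔ ∀ w ∈ s, support M φ {w}

lemma flat_iff_back {φ : InqForm P}
    (h : ∀ {W : Type} (M : PseudoModel P W) (s : Set W),
      (∀ w ∈ s, support M φ {w}) → support M φ s) : Flat φ := by
  intro W M s
  constructor
  · intro hs w hw
    exact support_mono M φ hs (by simpa using hw)
  · exact h M s

lemma flat_atom (p : P) : Flat (.atom p : InqForm P) := by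
  apply flat_iff_back
  intro W M s h w hw
  simpa using (h w hw) rfl

lemma flat_bot : Flat (.bot : InqForm P) := by
  apply flat_iff_back
  intro W M s h
  show s = ∅
  rw [Set.eq_empty_iff_forall_notMem]
  intro w hw
  exact Set.singleton_ne_empty w (h w hw)

lemma flat_box (φ : InqForm P) : Flat (.box φ) := by
  apply flat_iff_back
  intro W M s h w hw
  exact (h w hw) w rfl

lemma flat_boxplus (φ : InqForm P) : Flat (.boxplus φ) := by
  apply flat_iff_back
  intro W M s h w hw
  exact (h w hw) w rfl

lemma flat_and {φ ψ : InqForm P} (hφ : Flat φ) (hψ : Flat ψ) : Flat (.and φ ψ) := by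
  apply flat_iff_back
  intro W M s h
  constructor
  · exact (hφ M s).2 fun w hw => ((h w hw)).1
  · exact (hψ M s).2 fun w hw => ((h w hw)).2

lemma flat_impl {φ ψ : InqForm P} (hψ : Flat ψ) : Flat (.impl φ ψ) := by
  apply flat_iff_back
  intro W M s h t hts hφt
  refine (hψ M t).2 fun w hw => ?_
  have h1 : support M φ {w} := support_mono M φ hφt (by simpa using hw)
  exact h w (hts hw) {w} (by rfl) h1

/-- big conjunction -/
def bigAnd (l : List (InqForm P)) : InqForm P := l.foldr .and (.impl .bot .bot)

lemma support_top {W : Type} (M : PseudoModel P W) (s : Set W) :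
    support M (.impl .bot .bot : InqForm P) s := fun t _ ht => ht

lemma support_bigAnd {W : Type} (M : PseudoModel P W) (l : List (InqForm P)) (s : Set W) :
    support M (bigAnd l) s ↔ ∀ χ ∈ l, support M χ s := by
  induction l with
  | nil => simpa [bigAnd] using support_top M s
  | cons a l ih =>
      simp only [bigAnd, List.foldr_cons, List.mem_cons]
      constructor
      · rintro ⟨h1, h2⟩ χ (rfl | hχ)
        · exact h1
        · exact (ih.1 h2) χ hχ
      · intro h
        exact ⟨h a (Or.inl rfl), ih.2 fun χ hχ => h χ (Or.inr hχ)⟩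

lemma flat_bigAnd {l : List (InqForm P)} (h : ∀ χ ∈ l, Flat χ) : Flat (bigAnd l) := by
  apply flat_iff_back
  intro W M s hs
  rw [support_bigAnd]
  intro χ hχ
  exact (h χ hχ M s).2 fun w hw => (support_bigAnd M l {w}).1 (hs w hw) χ hχ

end InqCompact

namespace InqCompact
variable {P : Type}

/-- resolutions -/
def Res : InqForm P → List (InqForm P)
  | .atom p => [.atom p]
  | .bot => [.bot]
  | .and φ ψ => (Res φ).flatMap (fun α => (Res ψ).map (fun β => .and α β))
  | .ior φ ψ => Res φ ++ Res ψ
  | .impl φ ψ =>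
      (((Res φ).map (fun _ => Res ψ)).sections).map
        (fun c => bigAnd (List.zipWith .impl (Res φ) c))
  | .box φ => [.box φ]
  | .boxplus φ => [.boxplus φ]

/-- elements of zipWith .impl under a Forall₂ hypothesis -/
lemma mem_zipWith_impl {l c : List (InqForm P)} {Q : InqForm P → Prop}
    (h : List.Forall₂ (fun (β : InqForm P) (_ : InqForm P) => Q β) c l) :
    ∀ χ ∈ List.zipWith InqForm.impl l c, ∃ a b, a ∈ l ∧ Q b ∧ χ = .impl a b := by
  induction h with
  | nil => intro χ hχ; simp at hχ
  | @cons b a c' l' hQ _ ih =>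
      intro χ hχ
      simp only [List.zipWith_cons_cons, List.mem_cons] at hχ
      rcases hχ with rfl | hχ
      · exact ⟨a, b, by simp, hQ, rfl⟩
      · obtain ⟨a', b', ha', hb', rfl⟩ := ih χ hχ
        exact ⟨a', b', by simp [ha'], hb', rfl⟩

lemma exists_mem_zipWith {l c : List (InqForm P)} {Q : InqForm P → Prop}
    (h : List.Forall₂ (fun (β : InqForm P) (_ : InqForm P) => Q β) c l)
    {a : InqForm P} (ha : a ∈ l) :
    ∃ b, Q b ∧ (.impl a b : InqForm P) ∈ List.zipWith InqForm.impl l c := by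
  induction h with
  | nil => simp at ha
  | @cons b a' c' l' hQ h2 ih =>
      simp only [List.mem_cons] at ha
      rcases ha with rfl | ha
      · exact ⟨b, hQ, by simp⟩
      · obtain ⟨b', hb', hmem⟩ := ih ha
        exact ⟨b', hb', by simp [hmem]⟩

lemma sections_forall₂ {φ ψ : InqForm P} {c : List (InqForm P)}
    (hc : c ∈ (((Res φ).map (fun _ => Res ψ)).sections)) :
    List.Forall₂ (fun (β : InqForm P) (_ : InqForm P) => β ∈ Res ψ) c (Res φ) := by
  have := List.mem_sections.1 hc
  rwa [List.forall₂_map_right_iff] at this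

lemma map_mem_sections {φ ψ : InqForm P} {pick : InqForm P → InqForm P}
    (h : ∀ α ∈ Res φ, pick α ∈ Res ψ) :
    (Res φ).map pick ∈ (((Res φ).map (fun _ => Res ψ)).sections) := by
  rw [List.mem_sections, List.forall₂_map_right_iff, List.forall₂_map_left_iff]
  have key : ∀ l : List (InqForm P), (∀ α ∈ l, pick α ∈ Res ψ) →
      List.Forall₂ (fun (c _ : InqForm P) => pick c ∈ Res ψ) l l := by
    intro l
    induction l with
    | nil => intro _; simp
    | cons a l ih =>
        intro hl
        exact List.Forall₂.cons (hl a (by simp)) (ih fun α hα => hl α (by simp [hα]))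
  exact key (Res φ) h

lemma zipWith_map_pick (f : InqForm P → InqForm P) (l : List (InqForm P)) :
    List.zipWith InqForm.impl l (l.map f) = l.map (fun a => .impl a (f a)) := by
  induction l with
  | nil => rfl
  | cons a l ih => simp [ih]

/-- every resolution is flat -/
lemma res_flat : ∀ (φ : InqForm P), ∀ α ∈ Res φ, Flat α := by
  intro φ
  induction φ with
  | atom p => intro α hα; simp [Res] at hα; subst hα; exact flat_atom p
  | bot => intro α hα; simp [Res] at hα; subst hα; exact flat_bot
  | and φ ψ ihφ ihψ =>
      intro α hα
      simp only [Res, List.mem_flatMap, List.mem_map] at hα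
      obtain ⟨a, ha, b, hb, rfl⟩ := hα
      exact flat_and (ihφ a ha) (ihψ b hb)
  | impl φ ψ ihφ ihψ =>
      intro α hα
      simp only [Res, List.mem_map] at hα
      obtain ⟨c, hc, rfl⟩ := hα
      refine flat_bigAnd ?_
      intro χ hχ
      obtain ⟨a, b, ha, hb, rfl⟩ := mem_zipWith_impl (sections_forall₂ hc) χ hχ
      exact flat_impl (ihψ b hb)
  | ior φ ψ ihφ ihψ =>
      intro α hα
      simp only [Res, List.mem_append] at hα
      rcases hα with hα | hα
      · exact ihφ α hα
      · exact ihψ α hα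
  | box φ ih => intro α hα; simp [Res] at hα; subst hα; exact flat_box φ
  | boxplus φ ih => intro α hα; simp [Res] at hα; subst hα; exact flat_boxplus φ

/-- the resolution theorem -/
lemma res_iff {W : Type} (M : PseudoModel P W) :
    ∀ (φ : InqForm P) (s : Set W), support M φ s ↔ ∃ α ∈ Res φ, support M α s := by
  intro φ
  induction φ with
  | atom p => intro s; simp [Res]
  | bot => intro s; simp [Res]
  | and φ ψ ihφ ihψ =>
      intro s
      constructor
      · rintro ⟨h1, h2⟩
        obtain ⟨a, ha, hsa⟩ := (ihφ s).1 h1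
        obtain ⟨b, hb, hsb⟩ := (ihψ s).1 h2
        refine ⟨.and a b, ?_, hsa, hsb⟩
        simp only [Res, List.mem_flatMap, List.mem_map]
        exact ⟨a, ha, b, hb, rfl⟩
      · rintro ⟨α, hα, hsα⟩
        simp only [Res, List.mem_flatMap, List.mem_map] at hα
        obtain ⟨a, ha, b, hb, rfl⟩ := hα
        exact ⟨(ihφ s).2 ⟨a, ha, hsα.1⟩, (ihψ s).2 ⟨b, hb, hsα.2⟩⟩
  | impl φ ψ ihφ ihψ =>
      intro s
      constructor
      · intro h
        classical
        -- for each α ∈ Res φ pick a resolution of ψ supported at tα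
        have key : ∀ α ∈ Res φ, ∃ β ∈ Res ψ,
            support M β {w ∈ s | support M α {w}} := by
          intro α hα
          set tα : Set W := {w ∈ s | support M α {w}} with htα
          have h1 : support M α tα :=
            (res_flat φ α hα M tα).2 (fun w hw => hw.2)
          have h2 : support M φ tα := (ihφ tα).2 ⟨α, hα, h1⟩
          have h3 : support M ψ tα := h tα (fun w hw => hw.1) h2
          exact (ihψ tα).1 h3
        set pick : InqForm P → InqForm P := fun α =>
          if hα : α ∈ Res φ then (key α hα).choose else .bot with hpick
        have hpickmem : ∀ α ∈ Res φ, pick α ∈ Res ψ := by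
          intro α hα; simp only [hpick, dif_pos hα]; exact (key α hα).choose_spec.1
        refine ⟨bigAnd (List.zipWith .impl (Res φ) ((Res φ).map pick)), ?_, ?_⟩
        · simp only [Res, List.mem_map]
          exact ⟨(Res φ).map pick, map_mem_sections hpickmem, rfl⟩
        · rw [support_bigAnd]
          intro χ hχ
          rw [zipWith_map_pick, List.mem_map] at hχ
          obtain ⟨α, hα, rfl⟩ := hχ
          intro t hts hαt
          have hsub : t ⊆ {w ∈ s | support M α {w}} := by
            intro w hw
            exact ⟨hts hw, support_mono M α hαt (by simpa using hw)⟩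
          have := (key α hα).choose_spec.2
          simp only [hpick, dif_pos hα]
          exact support_mono M _ this hsub
      · rintro ⟨α, hα, hsα⟩
        simp only [Res, List.mem_map] at hα
        obtain ⟨c, hc, rfl⟩ := hα
        intro t hts hφt
        obtain ⟨a, ha, hat⟩ := (ihφ t).1 hφt
        obtain ⟨b, hb, hmem⟩ := exists_mem_zipWith (sections_forall₂ hc) ha
        have := (support_bigAnd M _ s).1 hsα _ hmem t hts hat
        exact (ihψ t).2 ⟨b, hb, this⟩
  | ior φ ψ ihφ ihψ =>
      intro s
      simp only [Res, List.mem_append]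
      constructor
      · rintro (h | h)
        · obtain ⟨a, ha, hsa⟩ := (ihφ s).1 h; exact ⟨a, Or.inl ha, hsa⟩
        · obtain ⟨b, hb, hsb⟩ := (ihψ s).1 h; exact ⟨b, Or.inr hb, hsb⟩
      · rintro ⟨α, (hα | hα), hsα⟩
        · exact Or.inl ((ihφ s).2 ⟨α, hα, hsα⟩)
        · exact Or.inr ((ihψ s).2 ⟨α, hα, hsα⟩)
  | box φ ih => intro s; simp [Res]
  | boxplus φ ih => intro s; simp [Res]

/-- modal depth -/
def md : InqForm P → ℕ
  | .atom _ => 0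
  | .bot => 0
  | .and φ ψ => max (md φ) (md ψ)
  | .impl φ ψ => max (md φ) (md ψ)
  | .ior φ ψ => max (md φ) (md ψ)
  | .box φ => md φ + 1
  | .boxplus φ => md φ + 1

lemma md_bigAnd {l : List (InqForm P)} {n : ℕ} (h : ∀ χ ∈ l, md χ ≤ n) :
    md (bigAnd l) ≤ n := by
  induction l with
  | nil => simp [bigAnd, md]
  | cons a l ih =>
      have : md (bigAnd (a :: l)) = max (md a) (md (bigAnd l)) := rfl
      rw [this]
      exact max_le (h a (by simp)) (ih fun χ hχ => h χ (by simp [hχ]))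

lemma md_res : ∀ (φ : InqForm P), ∀ α ∈ Res φ, md α ≤ md φ := by
  intro φ
  induction φ with
  | atom p => intro α hα; simp [Res] at hα; subst hα; exact le_refl _
  | bot => intro α hα; simp [Res] at hα; subst hα; exact le_refl _
  | and φ ψ ihφ ihψ =>
      intro α hα
      simp only [Res, List.mem_flatMap, List.mem_map] at hα
      obtain ⟨a, ha, b, hb, rfl⟩ := hα
      exact max_le_max (ihφ a ha) (ihψ b hb)
  | impl φ ψ ihφ ihψ =>
      intro α hα
      simp only [Res, List.mem_map] at hα
      obtain ⟨c, hc, rfl⟩ := hα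
      refine md_bigAnd ?_
      intro χ hχ
      obtain ⟨a, b, ha, hb, rfl⟩ := mem_zipWith_impl (sections_forall₂ hc) χ hχ
      exact max_le_max (ihφ a ha) (ihψ b hb)
  | ior φ ψ ihφ ihψ =>
      intro α hα
      simp only [Res, List.mem_append] at hα
      rcases hα with hα | hα
      · exact le_trans (ihφ α hα) (le_max_left _ _)
      · exact le_trans (ihψ α hα) (le_max_right _ _)
  | box φ ih => intro α hα; simp [Res] at hα; subst hα; exact le_refl _
  | boxplus φ ih => intro α hα; simp [Res] at hα; subst hα; exact le_refl _

end InqCompact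

namespace InqCompact
variable {P : Type}

/-- singleton characterizations -/
lemma s_impl {W : Type} (M : PseudoModel P W) (φ ψ : InqForm P) (w : W) :
    support M (.impl φ ψ) {w} ↔ (support M φ {w} → support M ψ {w}) := by
  constructor
  · intro h hφ; exact h {w} (by rfl) hφ
  · intro h t hts hφt
    rcases Set.subset_singleton_iff_eq.1 hts with rfl | rfl
    · exact support_empty M ψ
    · exact h hφt

lemma s_box {W : Type} (M : PseudoModel P W) (φ : InqForm P) (w : W) :
    support M (.box φ) {w} ↔ ∃ α ∈ Res φ, ∀ v ∈ M.sigma w, support M α {v} := by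
  have h1 : support M (.box φ) {w} ↔ support M φ (M.sigma w) := by
    constructor
    · intro h; exact h w rfl
    · intro h v hv; rw [Set.mem_singleton_iff] at hv; subst hv; exact h
  rw [h1, res_iff M φ]
  constructor
  · rintro ⟨α, hα, hs⟩
    exact ⟨α, hα, fun v hv => support_mono M α hs (by simpa using hv)⟩
  · rintro ⟨α, hα, hs⟩
    exact ⟨α, hα, (res_flat φ α hα M _).2 hs⟩

lemma s_boxplus {W : Type} (M : PseudoModel P W) (φ : InqForm P) (w : W) :
    support M (.boxplus φ) {w} ↔ ∀ t ∈ M.Sig w, ∃ α ∈ Res φ, ∀ v ∈ t, support M α {v} := by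
  have h1 : support M (.boxplus φ) {w} ↔ ∀ t ∈ M.Sig w, support M φ t := by
    constructor
    · intro h; exact h w rfl
    · intro h v hv; rw [Set.mem_singleton_iff] at hv; subst hv; exact h
  rw [h1]
  constructor
  · intro h t ht
    obtain ⟨α, hα, hs⟩ := (res_iff M φ t).1 (h t ht)
    exact ⟨α, hα, fun v hv => support_mono M α hs (by simpa using hv)⟩
  · intro h t ht
    obtain ⟨α, hα, hs⟩ := h t ht
    exact (res_iff M φ t).2 ⟨α, hα, (res_flat φ α hα M _).2 hs⟩

section Ultra

variable {I : Type} (U : Ultrafilter I) (W : I → Type) (M : ∀ i, PseudoModel P (W i))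

/-- the ultraproduct pseudo-model (no quotient needed) -/
def Mstar : PseudoModel P (∀ i, W i) where
  Sig f := { S | ∃ g : ∀ i, Set (W i), (∀ i, g i ∈ (M i).Sig (f i)) ∧
      S = {h | {i | h i ∈ g i} ∈ U} }
  Sig_nonempty f := by
    classical
    refine ⟨_, fun i => ((M i).Sig_nonempty (f i)).choose, fun i =>
      ((M i).Sig_nonempty (f i)).choose_spec, rfl⟩
  V p := {f | {i | f i ∈ (M i).V p} ∈ U}

lemma sigma_star (f : ∀ i, W i) :
    (Mstar U W M).sigma f = {h | {i | h i ∈ (M i).sigma (f i)} ∈ U} := by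
  classical
  ext h
  constructor
  · rintro ⟨S, ⟨g, hg, rfl⟩, hh⟩
    refine Filter.mem_of_superset hh ?_
    intro i hi
    exact ⟨g i, hg i, hi⟩
  · intro hh
    have hch : ∀ i, ∃ t, t ∈ (M i).Sig (f i) ∧ (h i ∈ (M i).sigma (f i) → h i ∈ t) := by
      intro i
      by_cases hx : h i ∈ (M i).sigma (f i)
      · obtain ⟨t, ht1, ht2⟩ := hx
        exact ⟨t, ht1, fun _ => ht2⟩
      · obtain ⟨t, ht⟩ := (M i).Sig_nonempty (f i)
        exact ⟨t, ht, fun hx' => absurd hx' hx⟩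
    choose g hg1 hg2 using hch
    refine ⟨_, ⟨g, hg1, rfl⟩, ?_⟩
    exact Filter.mem_of_superset hh (fun i hi => hg2 i hi)

/-- finite disjunctions over a list commute with ultrafilter membership -/
lemma ultra_list_exists {X : Type*} (l : List X) (Q : X → I → Prop) :
    {i | ∃ a ∈ l, Q a i} ∈ U ↔ ∃ a ∈ l, {i | Q a i} ∈ U := by
  induction l with
  | nil =>
      simp only [List.not_mem_nil, false_and, exists_false, Set.setOf_false]
      simpa using (Filter.empty_notMem U.toFilter)
  | cons a l ih =>
      have hset : {i | ∃ b ∈ (a :: l), Q b i} = {i | Q a i} ∪ {i | ∃ b ∈ l, Q b i} := by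
        ext i; simp [List.mem_cons, or_and_right, exists_or]
      rw [hset, Ultrafilter.union_mem_iff, ih]
      simp [List.mem_cons, or_and_right, exists_or]

lemma ultra_imp (p q : I → Prop) :
    {i | p i → q i} ∈ U ↔ ({i | p i} ∈ U → {i | q i} ∈ U) := by
  constructor
  · intro h hp
    refine Filter.mem_of_superset (Filter.inter_mem h hp) ?_
    rintro i ⟨h1, h2⟩
    exact h1 h2
  · intro h
    rcases Ultrafilter.mem_or_compl_mem U {i | p i} with hp | hp
    · exact Filter.mem_of_superset (h hp) fun i hi _ => hi
    · exact Filter.mem_of_superset hp fun i hi hpi => absurd hpi hi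

lemma los : ∀ (n : ℕ) (φ : InqForm P), md φ ≤ n → ∀ f : ∀ i, W i,
    (support (Mstar U W M) φ {f} ↔ {i | support (M i) φ {f i}} ∈ U) := by
  classical
  intro n
  induction n using Nat.strong_induction_on with
  | _ n ihn =>
    intro φ
    induction φ with
    | atom p =>
        intro _ f
        constructor
        · intro hh
          have h1 : f ∈ (Mstar U W M).V p := hh rfl
          have h2 : {i | f i ∈ (M i).V p} ∈ U := h1
          refine Filter.mem_of_superset h2 (fun i hi => ?_)
          show support (M i) (.atom p) {f i}
          exact Set.singleton_subset_iff.2 hi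
        · intro hh
          show ({f} : Set _) ⊆ (Mstar U W M).V p
          rw [Set.singleton_subset_iff]
          show {i | f i ∈ (M i).V p} ∈ U
          refine Filter.mem_of_superset hh (fun i hi => ?_)
          have h3 : ({f i} : Set (W i)) ⊆ (M i).V p := hi
          exact h3 rfl
    | bot =>
        intro _ f
        constructor
        · intro hh; exact absurd hh (Set.singleton_ne_empty f)
        · intro hh
          exfalso
          have hempty : {i | support (M i) InqForm.bot {f i}} = (∅ : Set I) := by
            ext i
            simp only [Set.mem_setOf_eq, Set.mem_empty_iff_false, iff_false]
            exact fun hc => Set.singleton_ne_empty (f i) hc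
          rw [hempty] at hh
          exact Filter.empty_notMem U.toFilter hh
    | and φ ψ ihφ ihψ =>
        intro hmd f
        have hiφ := ihφ (le_trans (le_max_left _ _) hmd) f
        have hiψ := ihψ (le_trans (le_max_right _ _) hmd) f
        have hset : {i | support (M i) (.and φ ψ) {f i}} =
            {i | support (M i) φ {f i}} ∩ {i | support (M i) ψ {f i}} := by
          ext i
          show (support (M i) φ {f i} ∧ support (M i) ψ {f i}) ↔ _
          simp [Set.mem_inter_iff]
        show (support (Mstar U W M) φ {f} ∧ support (Mstar U W M) ψ {f}) ↔ _
        constructor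
        · rintro ⟨h1, h2⟩
          exact Filter.mem_of_superset (Filter.inter_mem (hiφ.1 h1) (hiψ.1 h2))
            (fun i hi => ⟨hi.1, hi.2⟩)
        · intro hh
          rw [hset] at hh
          exact ⟨hiφ.2 (Filter.mem_of_superset hh fun i hi => hi.1),
            hiψ.2 (Filter.mem_of_superset hh fun i hi => hi.2)⟩
    | impl φ ψ ihφ ihψ =>
        intro hmd f
        have hiφ := ihφ (le_trans (le_max_left _ _) hmd) f
        have hiψ := ihψ (le_trans (le_max_right _ _) hmd) f
        have hset : {i | support (M i) (.impl φ ψ) {f i}} =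
            {i | support (M i) φ {f i} → support (M i) ψ {f i}} := by
          ext i
          simp only [Set.mem_setOf_eq]
          exact s_impl (M i) φ ψ (f i)
        rw [s_impl, hset, ultra_imp, hiφ, hiψ]
    | ior φ ψ ihφ ihψ =>
        intro hmd f
        have hiφ := ihφ (le_trans (le_max_left _ _) hmd) f
        have hiψ := ihψ (le_trans (le_max_right _ _) hmd) f
        have hset : {i | support (M i) (.ior φ ψ) {f i}} =
            {i | support (M i) φ {f i}} ∪ {i | support (M i) ψ {f i}} := by
          ext i
          show (support (M i) φ {f i} ∨ support (M i) ψ {f i}) ↔ _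
          simp [Set.mem_union]
        show (support (Mstar U W M) φ {f} ∨ support (Mstar U W M) ψ {f}) ↔ _
        constructor
        · rintro (h1 | h1)
          · exact Filter.mem_of_superset (hiφ.1 h1) (fun i hi => Or.inl hi)
          · exact Filter.mem_of_superset (hiψ.1 h1) (fun i hi => Or.inr hi)
        · intro hh
          rw [hset] at hh
          rcases Ultrafilter.union_mem_iff.1 hh with h1 | h1
          · exact Or.inl (hiφ.2 h1)
          · exact Or.inr (hiψ.2 h1)
    | box φ ih =>
        intro hmd f
        have hmd' : md φ + 1 ≤ n := hmd
        have IH : ∀ α ∈ Res φ, ∀ v : ∀ i, W i,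
            (support (Mstar U W M) α {v} ↔ {i | support (M i) α {v i}} ∈ U) := by
          intro α hα v
          exact ihn (n - 1) (by omega) α (le_trans (md_res φ α hα) (by omega)) v
        have hset : {i | support (M i) (.box φ) {f i}} =
            {i | ∃ α ∈ Res φ, ∀ u ∈ (M i).sigma (f i), support (M i) α {u}} := by
          ext i
          simp only [Set.mem_setOf_eq]
          exact s_box (M i) φ (f i)
        rw [s_box, hset, ultra_list_exists]
        refine exists_congr fun α => and_congr_right fun hα => ?_
        constructor
        · intro h
          by_contra hS
          rw [← Ultrafilter.compl_mem_iff_notMem] at hS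
          have hSc : {i | ∃ u ∈ (M i).sigma (f i), ¬ support (M i) α {u}} ∈ U := by
            refine Filter.mem_of_superset hS ?_
            intro i hi
            simp only [Set.mem_compl_iff, Set.mem_setOf_eq, not_forall] at hi
            obtain ⟨u, hu, hnu⟩ := hi
            exact ⟨u, hu, hnu⟩
          have hch : ∀ i, ∃ u : W i, (∃ u' ∈ (M i).sigma (f i), ¬ support (M i) α {u'}) →
              (u ∈ (M i).sigma (f i) ∧ ¬ support (M i) α {u}) := by
            intro i
            by_cases hi : ∃ u' ∈ (M i).sigma (f i), ¬ support (M i) α {u'}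
            · obtain ⟨u, hu1, hu2⟩ := hi
              exact ⟨u, fun _ => ⟨hu1, hu2⟩⟩
            · exact ⟨f i, fun hx => absurd hx hi⟩
          choose v hv using hch
          have hv2 : v ∈ (Mstar U W M).sigma f := by
            rw [sigma_star]
            exact Filter.mem_of_superset hSc (fun i hi => (hv i hi).1)
          have hv3 : {i | support (M i) α {v i}} ∈ U := (IH α hα v).1 (h v hv2)
          have hv4 : {i | ¬ support (M i) α {v i}} ∈ U :=
            Filter.mem_of_superset hSc (fun i hi => (hv i hi).2)
          obtain ⟨i, hi1, hi2⟩ := Filter.nonempty_of_mem (Filter.inter_mem hv3 hv4)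
          exact hi2 hi1
        · intro hS v hv
          rw [sigma_star] at hv
          refine (IH α hα v).2 ?_
          refine Filter.mem_of_superset (Filter.inter_mem hS hv) ?_
          rintro i ⟨h1, h2⟩
          exact h1 (v i) h2
    | boxplus φ ih =>
        intro hmd f
        have hmd' : md φ + 1 ≤ n := hmd
        have IH : ∀ α ∈ Res φ, ∀ v : ∀ i, W i,
            (support (Mstar U W M) α {v} ↔ {i | support (M i) α {v i}} ∈ U) := by
          intro α hα v
          exact ihn (n - 1) (by omega) α (le_trans (md_res φ α hα) (by omega)) v
        have hset : {i | support (M i) (.boxplus φ) {f i}} =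
            {i | ∀ s ∈ (M i).Sig (f i), ∃ α ∈ Res φ, ∀ u ∈ s, support (M i) α {u}} := by
          ext i
          simp only [Set.mem_setOf_eq]
          exact s_boxplus (M i) φ (f i)
        rw [s_boxplus, hset]
        constructor
        · intro h
          by_contra hS
          rw [← Ultrafilter.compl_mem_iff_notMem] at hS
          have hSc : {i | ∃ s ∈ (M i).Sig (f i),
              ∀ α ∈ Res φ, ∃ u ∈ s, ¬ support (M i) α {u}} ∈ U := by
            refine Filter.mem_of_superset hS ?_
            intro i hi
            simp only [Set.mem_compl_iff, Set.mem_setOf_eq, not_forall] at hi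
            obtain ⟨s, hs, hall⟩ := hi
            refine ⟨s, hs, ?_⟩
            intro α hα
            have h2 : ¬ ∀ u ∈ s, support (M i) α {u} := by
              intro hforall
              exact hall ⟨α, hα, hforall⟩
            simp only [not_forall] at h2
            obtain ⟨u, hu, hnu⟩ := h2
            exact ⟨u, hu, hnu⟩
          have hchg : ∀ i, ∃ s, s ∈ (M i).Sig (f i) ∧
              ((∃ s' ∈ (M i).Sig (f i), ∀ α ∈ Res φ, ∃ u ∈ s', ¬ support (M i) α {u}) →
                ∀ α ∈ Res φ, ∃ u ∈ s, ¬ support (M i) α {u}) := by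
            intro i
            by_cases hi : ∃ s' ∈ (M i).Sig (f i), ∀ α ∈ Res φ, ∃ u ∈ s', ¬ support (M i) α {u}
            · obtain ⟨s, hs1, hs2⟩ := hi
              exact ⟨s, hs1, fun _ => hs2⟩
            · obtain ⟨s, hs⟩ := (M i).Sig_nonempty (f i)
              exact ⟨s, hs, fun hx => absurd hx hi⟩
          choose g hg1 hg2 using hchg
          have ht : {h : ∀ i, W i | {i | h i ∈ g i} ∈ U} ∈ (Mstar U W M).Sig f :=
            ⟨g, hg1, rfl⟩
          obtain ⟨α, hα, hαt⟩ := h _ ht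
          have hBc : {i | ∃ u ∈ g i, ¬ support (M i) α {u}} ∈ U :=
            Filter.mem_of_superset hSc (fun i hi => hg2 i hi α hα)
          have hchv : ∀ i, ∃ u : W i, ((∃ u' ∈ g i, ¬ support (M i) α {u'}) →
              (u ∈ g i ∧ ¬ support (M i) α {u})) := by
            intro i
            by_cases hi : ∃ u' ∈ g i, ¬ support (M i) α {u'}
            · obtain ⟨u, hu1, hu2⟩ := hi
              exact ⟨u, fun _ => ⟨hu1, hu2⟩⟩
            · exact ⟨f i, fun hx => absurd hx hi⟩
          choose v hv using hchv
          have hv1 : v ∈ {h : ∀ i, W i | {i | h i ∈ g i} ∈ U} :=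
            Filter.mem_of_superset hBc (fun i hi => (hv i hi).1)
          have hv3 : {i | support (M i) α {v i}} ∈ U := (IH α hα v).1 (hαt v hv1)
          have hv4 : {i | ¬ support (M i) α {v i}} ∈ U :=
            Filter.mem_of_superset hBc (fun i hi => (hv i hi).2)
          obtain ⟨i, hi1, hi2⟩ := Filter.nonempty_of_mem (Filter.inter_mem hv3 hv4)
          exact hi2 hi1
        · rintro hU t ⟨g, hg, rfl⟩
          have h1 : {i | ∃ α ∈ Res φ, ∀ u ∈ g i, support (M i) α {u}} ∈ U :=
            Filter.mem_of_superset hU (fun i hi => hi (g i) (hg i))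
          rw [ultra_list_exists] at h1
          obtain ⟨α, hα, hC⟩ := h1
          refine ⟨α, hα, ?_⟩
          intro v hv
          refine (IH α hα v).2 ?_
          refine Filter.mem_of_superset (Filter.inter_mem hC hv) ?_
          rintro i ⟨h1, h2⟩
          exact h1 (v i) h2

end Ultra
end InqCompact


theorem world_pointed_compactness {P : Type} (Φ : Set (InqForm P))
    (h : ∀ Φ₀ ⊆ Φ, Φ₀.Finite →
      ∃ (W : Type) (M : PseudoModel P W) (w : W), ∀ φ ∈ Φ₀, support M φ {w}) :
    ∃ (W : Type) (M : PseudoModel P W) (w : W), ∀ φ ∈ Φ, support M φ {w} := by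
  classical
  open InqCompact in
  let I : Type := {s : Set (InqForm P) // s ⊆ Φ ∧ s.Finite}
  have hex : ∀ i : I, ∃ (W : Type) (M : PseudoModel P W) (w : W),
      ∀ φ ∈ i.1, support M φ {w} := fun i => h i.1 i.2.1 i.2.2
  let Wf : I → Type := fun i => (hex i).choose
  let Mf : ∀ i, PseudoModel P (Wf i) := fun i => (hex i).choose_spec.choose
  let wf : ∀ i, Wf i := fun i => (hex i).choose_spec.choose_spec.choose
  have hwf : ∀ i : I, ∀ φ ∈ i.1, support (Mf i) φ {wf i} := fun i =>
    (hex i).choose_spec.choose_spec.choose_spec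
  let A : InqForm P → Set I := fun φ => {i | φ ∈ i.1}
  have hne : (Filter.generate (A '' Φ)).NeBot := by
    rw [Filter.generate_neBot_iff]
    intro t hts htf
    obtain ⟨Φ₀, hΦ₀Φ, hΦ₀f, ht⟩ : ∃ Φ₀ ⊆ Φ, Φ₀.Finite ∧ A '' Φ₀ = t := by
      have := (Set.exists_subset_image_finite_and (f := A) (s := Φ)
        (p := fun u => u = t)).1 ⟨t, hts, htf, rfl⟩
      obtain ⟨Φ₀, h1, h2, h3⟩ := this
      exact ⟨Φ₀, h1, h2, h3⟩
    refine ⟨⟨Φ₀, hΦ₀Φ, hΦ₀f⟩, ?_⟩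
    rw [Set.mem_sInter]
    intro s hs
    rw [← ht] at hs
    obtain ⟨φ, hφ, rfl⟩ := hs
    exact hφ
  let U : Ultrafilter I := @Ultrafilter.of _ (Filter.generate (A '' Φ)) hne
  have hU : ∀ φ ∈ Φ, A φ ∈ U := by
    intro φ hφ
    exact (@Ultrafilter.of_le _ (Filter.generate (A '' Φ)) hne)
      (Filter.mem_generate_of_mem ⟨φ, hφ, rfl⟩)
  refine ⟨∀ i, Wf i, Mstar U Wf Mf, wf, ?_⟩
  intro φ hφ
  rw [los U Wf Mf (md φ) φ le_rfl wf]
  exact Filter.mem_of_superset (hU φ hφ) (fun i hi => hwf i φ hi)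
end
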